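/- arXiv:2105.01309 — 8 statements merged into one kernel-verified Lean document; each statement's English description precedes it below -/
import Mathlib

section
/- If $x, y \in \mathbb{R}^2$ are distinct points, $z \in S^1$ gives the infimum $\inf_{z \in S^1}(|x-z|+|z-y|)$, and both $x,y$ lie in the open unit disk $\mathbb{B}^2$, then the line through $0$ and $z$ bisects the angle $\angle xzy$. -/
/-!
Moving `z` along the circle, `t ↦ z exp(it)`, the first variation of `‖z - x‖ + ‖z - y‖`
vanishes at the minimum: the unit vectors from `x` and from `y` to `z` have opposite components
along the tangent `I z`. Their components along the normal `z` are positive, because `x` and `y`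
lie inside the disk, and each is determined by the tangential one through
`cos² + sin² = 1`. Hence the two unit vectors make the same angle with `z`.
-/

open Complex RealInnerProductSpace

theorem HasDerivAt.norm {F : Type*} [NormedAddCommGroup F] [InnerProductSpace ℝ F]
    {f : ℝ → F} {f' : F} {t : ℝ} (hf : HasDerivAt f f' t) (h0 : f t ≠ 0) :
    HasDerivAt (fun s => ‖f s‖) (⟪f t, f'⟫ / ‖f t‖) t := by
  have hsq : (‖f t‖ ^ 2 : ℝ) ≠ 0 := pow_ne_zero _ (norm_ne_zero_iff.mpr h0)
  have h := (Real.hasDerivAt_sqrt hsq).comp t hf.norm_sq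
  simp only [Function.comp_def, Real.sqrt_sq (norm_nonneg _)] at h
  refine h.congr_deriv ?_
  field_simp

theorem inner_sub_self_pos {V : Type*} [NormedAddCommGroup V] [InnerProductSpace ℝ V]
    {w z : V} (h : ‖w‖ < ‖z‖) : 0 < ⟪z - w, z⟫ := by
  rw [inner_sub_left, real_inner_self_eq_norm_sq]
  nlinarith [real_inner_le_norm w z, norm_nonneg w]

theorem EuclideanGeometry.angle_zero_eq_angle_sub {V : Type*} [NormedAddCommGroup V]
    [InnerProductSpace ℝ V] (x z : V) :
    EuclideanGeometry.angle x z 0 = InnerProductGeometry.angle (z - x) z := by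
  rw [EuclideanGeometry.angle, vsub_eq_sub, vsub_eq_sub, zero_sub,
    ← InnerProductGeometry.angle_neg_neg, neg_sub, neg_neg]

theorem Complex.inner_sq_add_inner_mul_I_sq (w z : ℂ) :
    ⟪w, z⟫ ^ 2 + ⟪w, z * I⟫ ^ 2 = ‖w‖ ^ 2 * ‖z‖ ^ 2 := by
  simp only [Complex.inner, Complex.sq_norm, normSq_apply, mul_re, mul_im, I_re, I_im,
    conj_re, conj_im]
  ring

theorem Complex.hasDerivAt_mul_exp_ofReal_mul_I (z : ℂ) :
    HasDerivAt (fun t : ℝ => z * exp (t * I)) (z * I) 0 := by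
  have h : HasDerivAt (fun t : ℝ => (t : ℂ) * I) I 0 := by
    simpa using (hasDerivAt_id (0 : ℝ)).ofReal_comp.mul_const I
  simpa using h.cexp.const_mul z

theorem inner_mul_I_div_add_eq_zero_of_isMinOn {x y z : ℂ} (hx : z ≠ x) (hy : z ≠ y)
    (hmin : IsMinOn (fun w => ‖w - x‖ + ‖w - y‖) (Metric.sphere 0 ‖z‖) z) :
    ⟪z - x, z * I⟫ / ‖z - x‖ + ⟪z - y, z * I⟫ / ‖z - y‖ = 0 := by
  have hγ := hasDerivAt_mul_exp_ofReal_mul_I z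
  have hderiv := ((hγ.sub_const x).norm (by simpa [sub_eq_zero] using hx)).add
    ((hγ.sub_const y).norm (by simpa [sub_eq_zero] using hy))
  have hloc : IsLocalMin (fun t : ℝ => ‖z * exp (t * I) - x‖ + ‖z * exp (t * I) - y‖) 0 :=
    Filter.Eventually.of_forall fun t => by
      simpa using hmin (by simp [norm_exp_ofReal_mul_I] : z * exp (t * I) ∈ Metric.sphere 0 ‖z‖)
  simpa using hloc.hasDerivAt_eq_zero hderiv

theorem inner_sub_div_norm_eq_sqrt {w z : ℂ} (hz : ‖z‖ = 1) (hw : ‖w‖ < 1) :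
    ⟪z - w, z⟫ / ‖z - w‖ = √(1 - (⟪z - w, z * I⟫ / ‖z - w‖) ^ 2) := by
  have hpos := inner_sub_self_pos (hw.trans_eq hz.symm)
  have hne : z - w ≠ 0 := fun h => by simp [h] at hpos
  have hnorm : 0 < ‖z - w‖ := norm_pos_iff.mpr hne
  have hsq := inner_sq_add_inner_mul_I_sq (z - w) z
  rw [hz] at hsq
  rw [eq_comm, Real.sqrt_eq_iff_mul_self_eq_of_pos (div_pos hpos hnorm)]
  field_simp
  linear_combination hsq

theorem stmt0_general (x y z : ℂ) (hx : ‖x‖ < 1) (hy : ‖y‖ < 1)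
    (hz : ‖z‖ = 1)
    (hmin : ∀ w : ℂ, ‖w‖ = 1 →
      ‖x - z‖ + ‖z - y‖ ≤ ‖x - w‖ + ‖w - y‖) :
    EuclideanGeometry.angle x z 0 = EuclideanGeometry.angle y z 0 := by
  have hmin' : IsMinOn (fun w => ‖w - x‖ + ‖w - y‖) (Metric.sphere 0 ‖z‖) z := fun w hw => by
    simpa [norm_sub_rev x, hz] using hmin w (by simpa [hz] using hw)
  have htan := inner_mul_I_div_add_eq_zero_of_isMinOn
    (fun h => (hx.trans_eq hz.symm).ne (congrArg norm h.symm))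
    (fun h => (hy.trans_eq hz.symm).ne (congrArg norm h.symm)) hmin'
  rw [EuclideanGeometry.angle_zero_eq_angle_sub, EuclideanGeometry.angle_zero_eq_angle_sub,
    InnerProductGeometry.angle, InnerProductGeometry.angle, hz, mul_one, mul_one,
    inner_sub_div_norm_eq_sqrt hz hx, inner_sub_div_norm_eq_sqrt hz hy,
    eq_neg_of_add_eq_zero_left htan, neg_sq]

/-- If `x, y` are distinct points of the open unit disk and `z ∈ S¹` minimizes
`|x-z|+|z-y|` over the unit circle, then the line through `0` and `z` bisects the
angle `∠xzy`; that is, the angle at `z` between `x` and `0` equals the angle at `z`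
between `y` and `0`. -/
theorem stmt0 (x y z : ℂ) (hx : ‖x‖ < 1) (hy : ‖y‖ < 1)
    (hxy : x ≠ y) (hz : ‖z‖ = 1)
    (hmin : ∀ w : ℂ, ‖w‖ = 1 →
      ‖x - z‖ + ‖z - y‖ ≤ ‖x - w‖ + ‖w - y‖) :
    EuclideanGeometry.angle x z 0 = EuclideanGeometry.angle y z 0 :=
  stmt0_general x y z hx hy hz hmin
end

section
/- If $x,y \in R(r,1)$ with $\arg(x)=\arg(y)$, then the triangular ratio metric satisfies $s_{R(r,1)}(x,y) = \frac{|x-y|}{\min\{2-|x+y|,\ |x+y|-2r\}}$. -/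
open Real Set

/-- The annular ring `R(r,1) = {z : r < |z| < 1}`. -/
def annulus (r : ℝ) : Set ℂ := {z : ℂ | r < ‖z‖ ∧ ‖z‖ < 1}

/-- The triangular ratio metric `s_G`. -/
noncomputable def sMetric (G : Set ℂ) (x y : ℂ) : ℝ :=
  ‖x - y‖ /
    sInf ((fun z => ‖x - z‖ + ‖z - y‖) '' frontier G)

/-- The `j*`-metric. -/
noncomputable def jStar (G : Set ℂ) (x y : ℂ) : ℝ :=
  ‖x - y‖ /
    (‖x - y‖ +
      2 * min (Metric.infDist x (frontier G)) (Metric.infDist y (frontier G)))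

/-- The (absolute) cross-ratio `|a,x,b,y|`. -/
noncomputable def crossRatio (a x b y : ℂ) : ℝ :=
  (‖a - b‖ * ‖x - y‖) / (‖a - x‖ * ‖b - y‖)

/-- The Möbius (Seittenranta) metric `δ_G`. -/
noncomputable def deltaMetric (G : Set ℂ) (x y : ℂ) : ℝ :=
  sSup ((fun p : ℂ × ℂ => Real.log (1 + crossRatio p.1 x p.2 y)) '' (frontier G ×ˢ frontier G))

/-!
On the common ray `ℝ≥0 • u` of `x` and `y`, the boundary points `u` and `r • u` give the
values `2 - ‖x + y‖` and `‖x + y‖ - 2r` of `z ↦ ‖x - z‖ + ‖z - y‖`. The triangle inequality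
shows that no point of the outer circle does better than the first value, and no point of the
inner circle better than the second, so the infimum is their minimum.
-/

section UnitVector

variable {E : Type*} [NormedAddCommGroup E] [NormedSpace ℝ E] {u : E}

lemma norm_smul_of_norm_eq_one (hu : ‖u‖ = 1) (a : ℝ) : ‖a • u‖ = |a| := by
  rw [norm_smul, hu, mul_one, Real.norm_eq_abs]

lemma norm_smul_sub_smul_of_norm_eq_one (hu : ‖u‖ = 1) (a b : ℝ) :
    ‖a • u - b • u‖ = |a - b| := by
  rw [← sub_smul, norm_smul_of_norm_eq_one hu]

end UnitVector

lemma Complex.exists_norm_eq_one_smul_of_arg_eq {x y : ℂ} (h : x.arg = y.arg) :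
    ∃ u : ℂ, ‖u‖ = 1 ∧ x = ‖x‖ • u ∧ y = ‖y‖ • u :=
  ⟨exp (x.arg * I), norm_exp_ofReal_mul_I _,
    by rw [real_smul, norm_mul_exp_arg_mul_I],
    by rw [real_smul, h, norm_mul_exp_arg_mul_I]⟩

section Annulus

variable {r : ℝ}

lemma isOpen_annulus (r : ℝ) : IsOpen (annulus r) :=
  isOpen_Ioo.preimage (f := fun z : ℂ => ‖z‖) continuous_norm

lemma closure_annulus_subset (r : ℝ) : closure (annulus r) ⊆ {z | r ≤ ‖z‖ ∧ ‖z‖ ≤ 1} :=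
  closure_minimal (fun _ hz => ⟨hz.1.le, hz.2.le⟩)
    (isClosed_Icc.preimage (f := fun z : ℂ => ‖z‖) continuous_norm)

lemma norm_eq_or_of_mem_frontier_annulus {z : ℂ} (hz : z ∈ frontier (annulus r)) :
    ‖z‖ = r ∨ ‖z‖ = 1 := by
  rw [(isOpen_annulus r).frontier_eq] at hz
  obtain ⟨hrz, hz1⟩ := closure_annulus_subset r hz.1
  by_contra! hne
  exact hz.2 ⟨hrz.lt_of_ne hne.1.symm, hz1.lt_of_ne hne.2⟩

lemma smul_mem_closure_annulus (hr0 : 0 ≤ r) (hr1 : r < 1) {u : ℂ} (hu : ‖u‖ = 1) {t : ℝ}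
    (ht : t ∈ Icc r 1) : t • u ∈ closure (annulus r) := by
  have hray : (fun s : ℝ => s • u) '' Ioo r 1 ⊆ annulus r := by
    rintro _ ⟨s, ⟨hrs, hs1⟩, rfl⟩
    simp only [annulus, mem_ofPred_eq, norm_smul_of_norm_eq_one hu, abs_of_pos (hr0.trans_lt hrs)]
    exact ⟨hrs, hs1⟩
  rw [← closure_Ioo hr1.ne] at ht
  exact closure_mono hray
    (image_closure_subset_closure_image (continuous_id.smul continuous_const) ⟨t, ht, rfl⟩)

lemma smul_mem_frontier_annulus (hr0 : 0 ≤ r) (hr1 : r < 1) {u : ℂ} (hu : ‖u‖ = 1) {t : ℝ}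
    (ht : t = r ∨ t = 1) : t • u ∈ frontier (annulus r) := by
  rw [(isOpen_annulus r).frontier_eq]
  have ht0 : 0 ≤ t := by rcases ht with rfl | rfl <;> linarith
  refine ⟨smul_mem_closure_annulus hr0 hr1 hu ?_, fun hmem => ?_⟩
  · rcases ht with rfl | rfl
    · exact ⟨le_rfl, hr1.le⟩
    · exact ⟨hr1.le, le_rfl⟩
  · obtain ⟨hrt, ht1⟩ := hmem
    rw [norm_smul_of_norm_eq_one hu, abs_of_nonneg ht0] at hrt ht1
    rcases ht with rfl | rfl <;> exact lt_irrefl _ ‹_›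

lemma isLeast_dist_sum_frontier_annulus (hr0 : 0 ≤ r) {u : ℂ} (hu : ‖u‖ = 1) {a b : ℝ}
    (ha0 : 0 ≤ a) (hb0 : 0 ≤ b) (ha : a • u ∈ annulus r) (hb : b • u ∈ annulus r) :
    IsLeast ((fun z => ‖a • u - z‖ + ‖z - b • u‖) '' frontier (annulus r))
      (min (2 - (a + b)) (a + b - 2 * r)) := by
  obtain ⟨hra, ha1⟩ := ha
  obtain ⟨hrb, hb1⟩ := hb
  rw [norm_smul_of_norm_eq_one hu, abs_of_nonneg ha0] at hra ha1
  rw [norm_smul_of_norm_eq_one hu, abs_of_nonneg hb0] at hrb hb1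
  have hr1 : r < 1 := hra.trans ha1
  have hvalue (t : ℝ) : ‖a • u - t • u‖ + ‖t • u - b • u‖ = |a - t| + |t - b| := by
    rw [norm_smul_sub_smul_of_norm_eq_one hu, norm_smul_sub_smul_of_norm_eq_one hu]
  constructor
  · rcases min_choice (2 - (a + b)) (a + b - 2 * r) with hmin | hmin <;> rw [hmin]
    · refine ⟨(1 : ℝ) • u, smul_mem_frontier_annulus hr0 hr1 hu (Or.inr rfl), ?_⟩
      simp only [hvalue, abs_of_neg (sub_neg.2 ha1), abs_of_pos (sub_pos.2 hb1)]
      ring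
    · refine ⟨r • u, smul_mem_frontier_annulus hr0 hr1 hu (Or.inl rfl), ?_⟩
      simp only [hvalue, abs_of_pos (sub_pos.2 hra), abs_of_neg (sub_neg.2 hrb)]
      ring
  · rintro _ ⟨z, hz, rfl⟩
    have hxz := abs_norm_sub_norm_le (a • u) z
    have hzy := abs_norm_sub_norm_le z (b • u)
    rw [norm_smul_of_norm_eq_one hu, abs_of_nonneg ha0] at hxz
    rw [norm_smul_of_norm_eq_one hu, abs_of_nonneg hb0] at hzy
    rw [abs_le] at hxz hzy
    rcases norm_eq_or_of_mem_frontier_annulus hz with hzr | hz1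
    · exact (min_le_right _ _).trans (by linarith)
    · exact (min_le_left _ _).trans (by linarith)

end Annulus

theorem stmt3_general (r : ℝ) (hr0 : 0 < r) (x y : ℂ)
    (hx : x ∈ annulus r) (hy : y ∈ annulus r) (harg : x.arg = y.arg) :
    sMetric (annulus r) x y =
      ‖x - y‖ /
        min (2 - ‖x + y‖) (‖x + y‖ - 2 * r) := by
  obtain ⟨u, hu, hxu, hyu⟩ := Complex.exists_norm_eq_one_smul_of_arg_eq harg
  have hxy : ‖x + y‖ = ‖x‖ + ‖y‖ := by
    rw [hxu, hyu, ← add_smul, norm_smul_of_norm_eq_one hu, norm_smul_of_norm_eq_one hu,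
      norm_smul_of_norm_eq_one hu, abs_norm, abs_norm, abs_of_nonneg (by positivity)]
  have hleast := isLeast_dist_sum_frontier_annulus hr0.le hu (norm_nonneg x) (norm_nonneg y)
    (hxu ▸ hx) (hyu ▸ hy)
  rw [← hxu, ← hyu] at hleast
  rw [sMetric, hleast.csInf_eq, hxy]

/-- For `x,y ∈ R(r,1)` with `arg x = arg y`,
`s_{R(r,1)}(x,y) = |x-y| / min{2-|x+y|, |x+y|-2r}`. -/
theorem stmt3 (r : ℝ) (hr0 : 0 < r) (hr1 : r < 1) (x y : ℂ)
    (hx : x ∈ annulus r) (hy : y ∈ annulus r) (harg : x.arg = y.arg) :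
    sMetric (annulus r) x y =
      ‖x - y‖ /
        min (2 - ‖x + y‖) (‖x + y‖ - 2 * r) :=
  stmt3_general r hr0 x y hx hy harg
end

section
/- Let $0<r<1$ and let $x,y\in R(r,1)$ with $|x|=|y|=h$, and let $\mu\in(0,\pi)$ be the angle $\angle x0y$. If $\cos(\mu/2) < r/h$ then $s_{R(r,1)}(x,y)=1$; if $r/h \le \cos(\mu/2) \le h$ then $s_{R(r,1)}(x,y)=\max\{h, \frac{h\sin(\mu/2)}{\sqrt{h^2+r^2-2hr\cos(\mu/2)}}\}$; if $\max\{r/h, h\} \le \cos(\mu/2) \le \frac{1+r}{2h}$ then $s_{R(r,1)}(x,y)=\frac{h\sin(\mu/2)}{\sqrt{h^2+r^2-2hr\cos(\mu/2)}}$; and if $\cos(\mu/2) > \max\{\frac{1+r}{2h}, h\}$ then $s_{R(r,1)}(x,y)=\frac{h\sin(\mu/2)}{\sqrt{1+h^2-2h\cos(\mu/2)}}$. -/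
/-!
A rotation, possibly composed with complex conjugation, puts `x` and `y` at `h e^{±iθ}` with
`θ = μ/2`. The boundary of the annulus is the union of the circles `|z| = r` and `|z| = 1`, and on
each of them we minimise `|x - z| + |z - y|`, i.e. we look for the smallest ellipse with foci `x, y`
that meets the circle. In coordinates centred at the midpoint `h cos θ`, with foci `(0, ±f)`, a
point `(P, Q)` lies outside the ellipse of semi-major axis `a` iff
`a²(a² - f²) ≤ a²P² + (a² - f²)Q²`, and on either circle this reduces to a sum of squares. The
minimum is `|x - y|` when the chord `[x, y]` meets the inner circle (`h cos θ < r`); it is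
`2 √(h² + ρ² - 2hρ cos θ)`, attained on the bisector, on the circle of radius `ρ` when
`(h - ρ cos θ)(h cos θ - ρ) ≥ 0`; and it is `2 sin θ`, attained at a point of tangency, on the unit
circle when `cos θ ≤ h`.
-/

open Real Set

open Complex Metric

lemma frontier_annulus {r : ℝ} (hr0 : 0 < r) (hr1 : r < 1) :
    frontier (annulus r) = sphere 0 r ∪ sphere 0 1 := by
  have hopen : IsOpen (annulus r) := isOpen_Ioo.preimage continuous_norm
  apply subset_antisymm
  · refine (continuous_norm.frontier_preimage_subset (Ioo r 1)).trans ?_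
    rw [frontier_Ioo hr1]
    rintro z (hz | hz) <;> simp_all
  · rintro z hz
    have hzr : ‖z‖ ∈ Icc r 1 := by rcases hz with hz | hz <;> simp_all [hr1.le]
    have hz0 : z ≠ 0 := norm_pos_iff.mp (hr0.trans_le hzr.1)
    rw [hopen.frontier_eq]
    refine ⟨?_, fun hz' => ?_⟩
    · have hmaps : MapsTo (fun t : ℝ => (t / ‖z‖ : ℂ) * z) (Ioo r 1) (annulus r) := by
        intro t ht
        simp only [annulus, mem_ofPred_eq, norm_mul, norm_div, norm_real, Real.norm_eq_abs,
          abs_norm, abs_of_pos (hr0.trans ht.1), div_mul_cancel₀ _ (norm_ne_zero_iff.mpr hz0)]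
        exact ht
      have := map_mem_closure (by fun_prop) (closure_Ioo hr1.ne ▸ hzr) hmaps
      simpa [div_self (ofReal_ne_zero.mpr (norm_ne_zero_iff.mpr hz0))] using this
    · rcases hz with hz | hz <;> simp_all [annulus]

lemma image_annulus (e : ℂ ≃ₗᵢ[ℝ] ℂ) (r : ℝ) : e '' annulus r = annulus r := by
  ext z
  refine ⟨?_, fun hz => ⟨e.symm z, by simpa [annulus] using hz, e.apply_symm_apply z⟩⟩
  rintro ⟨w, hw, rfl⟩
  simpa [annulus] using hw

lemma sMetric_apply_isometryEquiv {G : Set ℂ} (e : ℂ ≃ᵢ ℂ) (hG : e '' G = G) (x y : ℂ) :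
    sMetric G (e x) (e y) = sMetric G x y := by
  have hF : frontier G = e '' frontier G := by
    simpa [hG] using (e.toHomeomorph.image_frontier G).symm
  simp only [sMetric, ← dist_eq_norm]
  conv_lhs => rw [hF, image_image]
  simp only [e.dist_eq]

lemma sMetric_eq_one {G : Set ℂ} {x y z : ℂ} (hxy : x ≠ y) (hz : z ∈ frontier G)
    (hzxy : ‖x - z‖ + ‖z - y‖ = ‖x - y‖) : sMetric G x y = 1 := by
  have hleast : IsLeast ((fun z => ‖x - z‖ + ‖z - y‖) '' frontier G) ‖x - y‖ :=
    ⟨⟨z, hz, hzxy⟩, by rintro _ ⟨w, -, rfl⟩; exact norm_sub_le_norm_sub_add_norm_sub x w y⟩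
  rw [sMetric, hleast.csInf_eq, div_self (norm_ne_zero_iff.mpr (sub_ne_zero.mpr hxy))]

lemma sMetric_annulus_eq_div_min {r a b : ℝ} (hr0 : 0 < r) (hr1 : r < 1) {x y : ℂ}
    (ha : IsLeast ((fun z => ‖x - z‖ + ‖z - y‖) '' sphere 0 r) a)
    (hb : IsLeast ((fun z => ‖x - z‖ + ‖z - y‖) '' sphere 0 1) b) :
    sMetric (annulus r) x y = ‖x - y‖ / min a b := by
  rw [sMetric, frontier_annulus hr0 hr1, image_union, (ha.union hb).csInf_eq]

lemma exists_linearIsometryEquiv_apply_eq {x y : ℂ} {h : ℝ} (hx : ‖x‖ = h) (hy : ‖y‖ = h)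
    (h0 : 0 < h) :
    ∃ e : ℂ ≃ₗᵢ[ℝ] ℂ, e (h * exp (↑(InnerProductGeometry.angle x y / 2) * I)) = x ∧
      e (h * exp (-↑(InnerProductGeometry.angle x y / 2) * I)) = y := by
  have hx0 : x ≠ 0 := norm_pos_iff.mp (hx ▸ h0)
  have hy0 : y ≠ 0 := norm_pos_iff.mp (hy ▸ h0)
  have hxy : ‖x / y‖ = 1 := by rw [norm_div, hx, hy, div_self h0.ne']
  have hpolar_x : y * exp (↑(arg (x / y)) * I) = x := by
    have := norm_mul_exp_arg_mul_I (x / y)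
    rw [hxy, ofReal_one, one_mul] at this
    rw [this, mul_div_cancel₀ _ hy0]
  rw [Complex.angle_eq_abs_arg hx0 hy0]
  generalize arg (x / y) = φ at hpolar_x
  obtain ⟨a, rfl⟩ : ∃ a : ℝ, ↑h * exp (↑a * I) = y := ⟨_, hy ▸ norm_mul_exp_arg_mul_I y⟩
  subst hpolar_x
  set ω := Circle.exp (a + φ / 2)
  rcases le_total 0 φ with hφ | hφ
  · refine ⟨rotation ω, ?_, ?_⟩ <;>
      simp only [rotation_apply, ω, Circle.coe_exp, abs_of_nonneg hφ,
        mul_left_comm _ (h : ℂ), mul_assoc, ← Complex.exp_add] <;>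
      congr 2 <;> push_cast <;> ring
  · refine ⟨conjLIE.trans (rotation ω), ?_, ?_⟩ <;>
      simp only [LinearIsometryEquiv.trans_apply, conjLIE_apply, map_mul, conj_ofReal, ← exp_conj,
        rotation_apply, ω, Circle.coe_exp, abs_of_nonpos hφ,
        mul_left_comm _ (h : ℂ), mul_assoc, ← Complex.exp_add] <;>
      congr 2 <;> simp [map_ofNat] <;> ring

lemma sMetric_annulus_eq_std (r : ℝ) {x y : ℂ} {h : ℝ} (hx : ‖x‖ = h) (hy : ‖y‖ = h)
    (h0 : 0 < h) :
    sMetric (annulus r) x y =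
      sMetric (annulus r) (h * exp (↑(InnerProductGeometry.angle x y / 2) * I))
        (h * exp (-↑(InnerProductGeometry.angle x y / 2) * I)) := by
  obtain ⟨e, hex, hey⟩ := exists_linearIsometryEquiv_apply_eq hx hy h0
  generalize InnerProductGeometry.angle x y / 2 = θ at hex hey ⊢
  rw [← hex, ← hey]
  exact sMetric_apply_isometryEquiv e.toIsometryEquiv (image_annulus e r) _ _

lemma two_mul_le_sqrt_add_sqrt_of_outside_ellipse {P Q f a : ℝ}
    (hout : a ^ 2 * (a ^ 2 - f ^ 2) ≤ a ^ 2 * P ^ 2 + (a ^ 2 - f ^ 2) * Q ^ 2) :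
    2 * a ≤ √(P ^ 2 + (Q - f) ^ 2) + √(P ^ 2 + (Q + f) ^ 2) := by
  set u := P ^ 2 + (Q - f) ^ 2
  set v := P ^ 2 + (Q + f) ^ 2
  have hu : 0 ≤ u := by positivity
  have hv : 0 ≤ v := by positivity
  have hkey : 4 * a ^ 2 - u - v ≤ 2 * √(u * v) := by
    rcases le_or_gt (4 * a ^ 2 - u - v) 0 with hneg | hpos
    · exact hneg.trans (by positivity)
    · rw [← Real.sqrt_sq hpos.le, show (2 : ℝ) = √(2 ^ 2) by simp, ← Real.sqrt_mul (by norm_num)]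
      apply Real.sqrt_le_sqrt
      nlinarith
  rw [Real.sqrt_mul hu] at hkey
  nlinarith [Real.sq_sqrt hu, Real.sq_sqrt hv, Real.sqrt_nonneg u, Real.sqrt_nonneg v]

lemma sqrt_add_sqrt_eq_two_mul_of_mem_ellipse {P Q f a : ℝ} (ha : 0 < a) (hfQ : |f * Q| ≤ a ^ 2)
    (hon : a ^ 2 * P ^ 2 + (a ^ 2 - f ^ 2) * Q ^ 2 = a ^ 2 * (a ^ 2 - f ^ 2)) :
    √(P ^ 2 + (Q - f) ^ 2) + √(P ^ 2 + (Q + f) ^ 2) = 2 * a := by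
  have hfQ' := abs_le.mp hfQ
  have h1 : P ^ 2 + (Q - f) ^ 2 = ((a ^ 2 - f * Q) / a) ^ 2 := by
    field_simp; linear_combination hon
  have h2 : P ^ 2 + (Q + f) ^ 2 = ((a ^ 2 + f * Q) / a) ^ 2 := by
    field_simp; linear_combination hon
  rw [h1, h2, Real.sqrt_sq (by apply div_nonneg <;> linarith),
    Real.sqrt_sq (by apply div_nonneg <;> linarith)]
  field_simp; ring

lemma div_min_eq_max_div {a b c : ℝ} (ha : 0 ≤ a) (hb : 0 < b) (hc : 0 < c) :
    a / min b c = max (a / b) (a / c) := by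
  rcases le_total b c with hbc | hcb
  · rw [min_eq_left hbc, max_eq_left (div_le_div_of_nonneg_left ha hb hbc)]
  · rw [min_eq_right hcb, max_eq_right (div_le_div_of_nonneg_left ha hc hcb)]

lemma mem_sphere_zero_iff_re_sq_add_im_sq {z : ℂ} {ρ : ℝ} (hρ : 0 ≤ ρ) :
    z ∈ sphere 0 ρ ↔ z.re ^ 2 + z.im ^ 2 = ρ ^ 2 := by
  rw [mem_sphere_zero_iff_norm, ← pow_left_inj₀ (norm_nonneg z) hρ two_ne_zero, Complex.sq_norm,
    normSq_apply, ← sq, ← sq]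

section StandardPosition

variable {r h θ : ℝ}

lemma norm_std_sub (z : ℂ) :
    ‖↑h * exp (↑θ * I) - z‖ = √((z.re - h * Real.cos θ) ^ 2 + (z.im - h * Real.sin θ) ^ 2) := by
  rw [← dist_eq_norm, dist_comm, dist_eq_re_im]; simp

lemma norm_sub_std_conj (z : ℂ) :
    ‖z - ↑h * exp (-↑θ * I)‖ = √((z.re - h * Real.cos θ) ^ 2 + (z.im + h * Real.sin θ) ^ 2) := by
  rw [← dist_eq_norm, dist_eq_re_im]; simp [← ofReal_neg]

lemma norm_std_sub_std_conj (hh : 0 ≤ h) (hs : 0 ≤ Real.sin θ) :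
    ‖↑h * exp (↑θ * I) - ↑h * exp (-↑θ * I)‖ = 2 * h * Real.sin θ := by
  rw [← dist_eq_norm, dist_eq_re_im]
  simp [← ofReal_neg, ← two_mul, Real.sqrt_sq, mul_nonneg, hh, hs, mul_assoc]

lemma exists_mem_sphere_norm_std_sub_add_norm_sub_std_conj_eq (hh : 0 ≤ h)
    (hs : 0 ≤ Real.sin θ) (hcr : |h * Real.cos θ| ≤ r) (hrh : r ≤ h) :
    ∃ z ∈ sphere (0 : ℂ) r, ‖↑h * exp (↑θ * I) - z‖ + ‖z - ↑h * exp (-↑θ * I)‖ =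
      ‖↑h * exp (↑θ * I) - ↑h * exp (-↑θ * I)‖ := by
  have hcs := Real.cos_sq_add_sin_sq θ
  have hr : 0 ≤ r := (abs_nonneg _).trans hcr
  set q := √(r ^ 2 - (h * Real.cos θ) ^ 2)
  have hq2 : q ^ 2 = r ^ 2 - (h * Real.cos θ) ^ 2 :=
    Real.sq_sqrt (sub_nonneg.mpr (sq_abs (h * Real.cos θ) ▸ pow_le_pow_left₀ (abs_nonneg _) hcr 2))
  have hq : q ≤ h * Real.sin θ := by
    rw [← Real.sqrt_sq (mul_nonneg hh hs)]
    exact Real.sqrt_le_sqrt (by nlinarith [pow_le_pow_left₀ hr hrh 2])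
  refine ⟨⟨h * Real.cos θ, q⟩, ?_, ?_⟩
  · rw [mem_sphere_zero_iff_re_sq_add_im_sq hr, hq2]
    ring
  · rw [norm_std_sub, norm_sub_std_conj, norm_std_sub_std_conj hh hs]
    have hq0 : 0 ≤ q := Real.sqrt_nonneg _
    simp only [sub_self, zero_pow two_ne_zero, zero_add, Real.sqrt_sq_eq_abs]
    rw [abs_of_nonpos (by linarith), abs_of_nonneg (by linarith)]
    ring

lemma isLeast_sphere_one_tangent (hh : 0 < h) (hh1 : h ≤ 1) (hch : |Real.cos θ| ≤ h)
    (hs : 0 < Real.sin θ) :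
    IsLeast ((fun z => ‖↑h * exp (↑θ * I) - z‖ + ‖z - ↑h * exp (-↑θ * I)‖) '' sphere 0 1)
      (2 * Real.sin θ) := by
  have hcs := Real.cos_sq_add_sin_sq θ
  constructor
  · -- the ellipse with foci `h e^{±iθ}` and major axis `2 sin θ` touches the unit circle here
    set q := √(1 - (Real.cos θ / h) ^ 2)
    have hq2 : q ^ 2 = 1 - (Real.cos θ / h) ^ 2 := by
      refine Real.sq_sqrt (sub_nonneg.mpr ?_)
      rw [div_pow, div_le_one (by positivity), ← sq_abs]
      exact pow_le_pow_left₀ (abs_nonneg _) hch 2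
    refine ⟨⟨Real.cos θ / h, q⟩, ?_, ?_⟩
    · rw [mem_sphere_zero_iff_re_sq_add_im_sq zero_le_one, hq2]
      ring
    · simp only [norm_std_sub, norm_sub_std_conj]
      apply sqrt_add_sqrt_eq_two_mul_of_mem_ellipse hs
      · have hhq : h ^ 2 * q ^ 2 = h ^ 2 - Real.cos θ ^ 2 := by rw [hq2]; field_simp
        rw [abs_of_nonneg (by positivity), ← pow_le_pow_iff_left₀ (by positivity) (by positivity)
          two_ne_zero]
        nlinarith [mul_le_mul_of_nonneg_left (pow_le_one₀ hh.le hh1 : h ^ 2 ≤ 1)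
          (sq_nonneg (Real.sin θ))]
      · rw [mul_pow, hq2]
        field_simp
        linear_combination (h ^ 4 - h ^ 2) * hcs
  · rintro _ ⟨z, hz, rfl⟩
    have hz2 := (mem_sphere_zero_iff_re_sq_add_im_sq zero_le_one).mp hz
    simp only [norm_std_sub, norm_sub_std_conj]
    apply two_mul_le_sqrt_add_sqrt_of_outside_ellipse
    have key : Real.sin θ ^ 2 * (z.re - h * Real.cos θ) ^ 2
        + (Real.sin θ ^ 2 - (h * Real.sin θ) ^ 2) * z.im ^ 2
        - Real.sin θ ^ 2 * (Real.sin θ ^ 2 - (h * Real.sin θ) ^ 2)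
        = Real.sin θ ^ 2 * (h * z.re - Real.cos θ) ^ 2 := by
      linear_combination Real.sin θ ^ 2 * (1 - h ^ 2) * hz2 - Real.sin θ ^ 2 * (1 - h ^ 2) * hcs
    nlinarith [mul_nonneg (sq_nonneg (Real.sin θ)) (sq_nonneg (h * z.re - Real.cos θ))]

lemma isLeast_sphere_bisector {ρ : ℝ} (hh : 0 ≤ h) (hρ : 0 ≤ ρ)
    (hcond : 0 ≤ (h - ρ * Real.cos θ) * (h * Real.cos θ - ρ)) :
    IsLeast ((fun z => ‖↑h * exp (↑θ * I) - z‖ + ‖z - ↑h * exp (-↑θ * I)‖) '' sphere 0 ρ)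
      (2 * √(h ^ 2 + ρ ^ 2 - 2 * h * ρ * Real.cos θ)) := by
  have hcs := Real.cos_sq_add_sin_sq θ
  have ha2 : 0 ≤ h ^ 2 + ρ ^ 2 - 2 * h * ρ * Real.cos θ := by
    nlinarith [sq_nonneg (h - ρ * Real.cos θ), sq_nonneg (ρ * Real.sin θ)]
  constructor
  · refine ⟨ρ, by simp [abs_of_nonneg hρ], ?_⟩
    simp only [norm_std_sub, norm_sub_std_conj, ofReal_re, ofReal_im]
    rw [two_mul]
    congr 2 <;> linear_combination h ^ 2 * hcs
  · rintro _ ⟨z, hz, rfl⟩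
    have hz2 := (mem_sphere_zero_iff_re_sq_add_im_sq hρ).mp hz
    have hre : z.re ≤ ρ := (mem_sphere_zero_iff_norm.mp hz) ▸ re_le_norm z
    simp only [norm_std_sub, norm_sub_std_conj]
    apply two_mul_le_sqrt_add_sqrt_of_outside_ellipse
    rw [Real.sq_sqrt ha2]
    set A := h ^ 2 + ρ ^ 2 - 2 * h * ρ * Real.cos θ
    have key : A * (z.re - h * Real.cos θ) ^ 2 + (A - (h * Real.sin θ) ^ 2) * z.im ^ 2
        - A * (A - (h * Real.sin θ) ^ 2)
        = 2 * h * (ρ - z.re) * ((h - ρ * Real.cos θ) * (h * Real.cos θ - ρ))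
          + (h * Real.sin θ) ^ 2 * (ρ - z.re) ^ 2 := by
      linear_combination (A - (h * Real.sin θ) ^ 2) * hz2
        + (h ^ 2 * (A - ρ ^ 2 + z.re ^ 2) - h ^ 2 * (ρ - z.re) ^ 2) * hcs
    nlinarith [mul_nonneg (mul_nonneg hh (sub_nonneg.mpr hre)) hcond,
      mul_nonneg (sq_nonneg (h * Real.sin θ)) (sq_nonneg (ρ - z.re))]

lemma cos_lt_one_of_sin_pos (hs : 0 < Real.sin θ) : Real.cos θ < 1 := by
  nlinarith [Real.cos_sq_add_sin_sq θ, mul_pos hs hs]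

lemma sq_add_sq_sub_two_mul_mul_cos_pos {ρ : ℝ} (hh : 0 < h) (hρ : 0 < ρ) (hc : Real.cos θ < 1) :
    0 < h ^ 2 + ρ ^ 2 - 2 * h * ρ * Real.cos θ := by
  nlinarith [sq_nonneg (h - ρ), mul_pos (mul_pos hh hρ) (sub_pos.mpr hc)]

lemma sMetric_annulus_std_of_chord (hr0 : 0 < r) (hr1 : r < 1) (hh : 0 < h) (hs : 0 < Real.sin θ)
    (hcr : |h * Real.cos θ| ≤ r) (hrh : r ≤ h) :
    sMetric (annulus r) (h * exp (θ * I)) (h * exp (-θ * I)) = 1 := by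
  have hxy := norm_std_sub_std_conj hh.le hs.le (θ := θ)
  obtain ⟨z, hz, hzxy⟩ :=
    exists_mem_sphere_norm_std_sub_add_norm_sub_std_conj_eq hh.le hs.le hcr hrh
  refine sMetric_eq_one ?_ (frontier_annulus hr0 hr1 ▸ Or.inl hz) hzxy
  exact sub_ne_zero.mp (norm_ne_zero_iff.mp (hxy ▸ by positivity))

lemma sMetric_annulus_std_of_tangent (hr0 : 0 < r) (hr1 : r < 1) (hh : 0 < h) (hh1 : h ≤ 1)
    (hs : 0 < Real.sin θ) (hrc : r ≤ h * Real.cos θ) (hch : Real.cos θ ≤ h) :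
    sMetric (annulus r) (h * exp (θ * I)) (h * exp (-θ * I)) =
      max h (h * Real.sin θ / √(h ^ 2 + r ^ 2 - 2 * h * r * Real.cos θ)) := by
  have hc0 : 0 < Real.cos θ := pos_of_mul_pos_right (hr0.trans_le hrc) hh.le
  have hA := sq_add_sq_sub_two_mul_mul_cos_pos hh hr0 (cos_lt_one_of_sin_pos hs)
  rw [sMetric_annulus_eq_div_min hr0 hr1
      (isLeast_sphere_bisector hh.le hr0.le (mul_nonneg (by nlinarith) (sub_nonneg.mpr hrc)))
      (isLeast_sphere_one_tangent hh hh1 (by rwa [abs_of_pos hc0]) hs),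
    norm_std_sub_std_conj hh.le hs.le,
    div_min_eq_max_div (by positivity) (by positivity) (by positivity), max_comm]
  congr 1 <;> field_simp

lemma sMetric_annulus_std_of_inner (hr0 : 0 < r) (hr1 : r < 1) (hh : 0 < h)
    (hs : 0 < Real.sin θ) (hrc : r ≤ h * Real.cos θ) (hch : h ≤ Real.cos θ)
    (h2hc : 2 * h * Real.cos θ ≤ 1 + r) :
    sMetric (annulus r) (h * exp (θ * I)) (h * exp (-θ * I)) =
      h * Real.sin θ / √(h ^ 2 + r ^ 2 - 2 * h * r * Real.cos θ) := by
  have hc1 := cos_lt_one_of_sin_pos hs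
  have hA := sq_add_sq_sub_two_mul_mul_cos_pos hh hr0 hc1
  rw [sMetric_annulus_eq_div_min hr0 hr1
      (isLeast_sphere_bisector hh.le hr0.le (mul_nonneg (by nlinarith) (sub_nonneg.mpr hrc)))
      (isLeast_sphere_bisector hh.le zero_le_one
        (mul_nonneg_of_nonpos_of_nonpos (by linarith) (by nlinarith))),
    norm_std_sub_std_conj hh.le hs.le,
    min_eq_left (mul_le_mul_of_nonneg_left (Real.sqrt_le_sqrt (by nlinarith)) zero_le_two)]
  field_simp

lemma sMetric_annulus_std_of_outer (hr0 : 0 < r) (hr1 : r < 1) (hh : 0 < h)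
    (hs : 0 < Real.sin θ) (hch : h ≤ Real.cos θ) (h2hc : 1 + r ≤ 2 * h * Real.cos θ) :
    sMetric (annulus r) (h * exp (θ * I)) (h * exp (-θ * I)) =
      h * Real.sin θ / √(1 + h ^ 2 - 2 * h * Real.cos θ) := by
  have hc1 := cos_lt_one_of_sin_pos hs
  have hB := sq_add_sq_sub_two_mul_mul_cos_pos hh one_pos hc1
  rw [sMetric_annulus_eq_div_min hr0 hr1
      (isLeast_sphere_bisector hh.le hr0.le (mul_nonneg (by nlinarith) (by linarith)))
      (isLeast_sphere_bisector hh.le zero_le_one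
        (mul_nonneg_of_nonpos_of_nonpos (by linarith) (by nlinarith))),
    norm_std_sub_std_conj hh.le hs.le,
    min_eq_right (mul_le_mul_of_nonneg_left (Real.sqrt_le_sqrt (by nlinarith)) zero_le_two)]
  rw [show h ^ 2 + 1 ^ 2 - 2 * h * 1 * Real.cos θ = 1 + h ^ 2 - 2 * h * Real.cos θ by ring] at hB ⊢
  field_simp

end StandardPosition

theorem stmt4_general (r h μ : ℝ) (hr0 : 0 < r) (hr1 : r < 1) (x y : ℂ)
    (hx : x ∈ annulus r)
    (hxh : ‖x‖ = h) (hyh : ‖y‖ = h)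
    (hμ : μ = EuclideanGeometry.angle x 0 y) (hμ0 : 0 < μ) (hμπ : μ < π) :
    (Real.cos (μ / 2) < r / h → sMetric (annulus r) x y = 1) ∧
    (r / h ≤ Real.cos (μ / 2) ∧ Real.cos (μ / 2) ≤ h →
      sMetric (annulus r) x y =
        max h (h * Real.sin (μ / 2) /
          Real.sqrt (h ^ 2 + r ^ 2 - 2 * h * r * Real.cos (μ / 2)))) ∧
    (max (r / h) h ≤ Real.cos (μ / 2) ∧ Real.cos (μ / 2) ≤ (1 + r) / (2 * h) →
      sMetric (annulus r) x y =
        h * Real.sin (μ / 2) /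
          Real.sqrt (h ^ 2 + r ^ 2 - 2 * h * r * Real.cos (μ / 2))) ∧
    (Real.cos (μ / 2) > max ((1 + r) / (2 * h)) h →
      sMetric (annulus r) x y =
        h * Real.sin (μ / 2) /
          Real.sqrt (1 + h ^ 2 - 2 * h * Real.cos (μ / 2))) := by
  obtain ⟨hxr, hx1⟩ := hx
  have hrh : r < h := hxh ▸ hxr
  have hh1 : h < 1 := hxh ▸ hx1
  have hh0 : 0 < h := hr0.trans hrh
  have hangle : μ / 2 = InnerProductGeometry.angle x y / 2 := by
    simp [hμ, EuclideanGeometry.angle]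
  rw [sMetric_annulus_eq_std r hxh hyh hh0, ← hangle]
  have hc0 : 0 < Real.cos (μ / 2) :=
    Real.cos_pos_of_mem_Ioo ⟨by linarith [Real.pi_pos], by linarith⟩
  have hs0 : 0 < Real.sin (μ / 2) :=
    Real.sin_pos_of_pos_of_lt_pi (by linarith) (by linarith [Real.pi_pos])
  have h2h : 0 < 2 * h := by positivity
  refine ⟨fun hcr => ?_, fun ⟨hrc, hch⟩ => ?_, fun ⟨hc, hc'⟩ => ?_, fun hc => ?_⟩
  · exact sMetric_annulus_std_of_chord hr0 hr1 hh0 hs0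
      (by rw [abs_of_pos (by positivity)]; exact ((lt_div_iff₀' hh0).mp hcr).le) hrh.le
  · exact sMetric_annulus_std_of_tangent hr0 hr1 hh0 hh1.le hs0 ((div_le_iff₀' hh0).mp hrc) hch
  · rw [max_le_iff] at hc
    exact sMetric_annulus_std_of_inner hr0 hr1 hh0 hs0 ((div_le_iff₀' hh0).mp hc.1) hc.2
      ((le_div_iff₀' h2h).mp hc')
  · rw [gt_iff_lt, max_lt_iff] at hc
    exact sMetric_annulus_std_of_outer hr0 hr1 hh0 hs0 hc.2.le ((div_lt_iff₀' h2h).mp hc.1).le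

/-- The four-case formula for `s_{R(r,1)}(x,y)` when `|x| = |y| = h` and
`μ ∈ (0,π)` is the angle `∠x0y`. -/
theorem stmt4 (r h μ : ℝ) (hr0 : 0 < r) (hr1 : r < 1) (x y : ℂ)
    (hx : x ∈ annulus r) (hy : y ∈ annulus r)
    (hxh : ‖x‖ = h) (hyh : ‖y‖ = h)
    (hμ : μ = EuclideanGeometry.angle x 0 y) (hμ0 : 0 < μ) (hμπ : μ < π) :
    (Real.cos (μ / 2) < r / h → sMetric (annulus r) x y = 1) ∧
    (r / h ≤ Real.cos (μ / 2) ∧ Real.cos (μ / 2) ≤ h →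
      sMetric (annulus r) x y =
        max h (h * Real.sin (μ / 2) /
          Real.sqrt (h ^ 2 + r ^ 2 - 2 * h * r * Real.cos (μ / 2)))) ∧
    (max (r / h) h ≤ Real.cos (μ / 2) ∧ Real.cos (μ / 2) ≤ (1 + r) / (2 * h) →
      sMetric (annulus r) x y =
        h * Real.sin (μ / 2) /
          Real.sqrt (h ^ 2 + r ^ 2 - 2 * h * r * Real.cos (μ / 2))) ∧
    (Real.cos (μ / 2) > max ((1 + r) / (2 * h)) h →
      sMetric (annulus r) x y =
        h * Real.sin (μ / 2) /
          Real.sqrt (1 + h ^ 2 - 2 * h * Real.cos (μ / 2))) :=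
  stmt4_general r h μ hr0 hr1 x y hx hxh hyh hμ hμ0 hμπ
end

section
/- For all $x,y$ in the punctured unit disk $\mathbb{B}^2\setminus\{0\}$ with $|y|\le|x|$, the Möbius metric satisfies $\delta_{\mathbb{B}^2\setminus\{0\}}(x,y) = \max\left\{ \rho_{\mathbb{B}^2}(x,y),\ \log\left(1 + \frac{|x-y|}{(1-|x|)|y|}\right) \right\}$. -/
open Real Set

/-- The inverse hyperbolic tangent. -/
noncomputable def arth (x : ℝ) : ℝ := Real.log ((1 + x) / (1 - x)) / 2

/-- The hyperbolic metric of the unit disk, via `th(ρ(x,y)/2) = |(x-y)/(1-x·ȳ)|`. -/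
noncomputable def rhoDisk (x y : ℂ) : ℝ :=
  2 * arth (‖(x - y) / (1 - x * (starRingEnd ℂ) y)‖)

/-!
The boundary of the punctured disk is `S¹ ∪ {0}`, so the supremum defining `δ` splits according
to where the two boundary points `a, b` lie.

* Both on the circle: the disk automorphism `z ↦ (z - x)/(1 - x̄ z)` preserves absolute
  cross-ratios and the circle and sends `x` to `0`, `y` to some `w`. For `x = 0`,
  `|a,0,b,w| = |a - b||w|/|b - w| ≤ 2|w|/(1 - |w|)`, with equality at `a = -b = -w/|w|`,
  and `log(1 + 2m/(1 - m)) = 2 arth m = ρ(x, y)` for `m = |w|`.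
* `b = 0`: `|a,x,0,y| = |x - y|/(|a - x||y|)` and `|a - x| ≥ 1 - |x|`, with equality at
  `a = x/|x|`.
* `a = 0`: `|0,x,b,y| = |x - y|/(|x||b - y|)` and `|x||b - y| ≥ |x|(1 - |y|) ≥ (1 - |x|)|y|`,
  the last step being exactly `|y| ≤ |x|`.
-/

open ComplexConjugate Metric

section PuncturedBall

variable {E : Type*} [NormedAddCommGroup E] [NormedSpace ℝ E] [Nontrivial E]

theorem closure_ball_sdiff_center (c : E) {r : ℝ} (hr : r ≠ 0) :
    closure (ball c r \ {c}) = closedBall c r := by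
  refine ((closure_mono sdiff_subset).trans_eq (closure_ball c hr)).antisymm ?_
  rw [← closure_ball c hr]
  exact closure_minimal ((dense_compl_singleton c).open_subset_closure_inter isOpen_ball)
    isClosed_closure

theorem frontier_ball_sdiff_center (c : E) {r : ℝ} (hr : 0 < r) :
    frontier (ball c r \ {c}) = sphere c r ∪ {c} := by
  rw [(isOpen_ball.sdiff isClosed_singleton).frontier_eq, closure_ball_sdiff_center c hr.ne',
    sdiff_sdiff_right, closedBall_sdiff_ball,
    inter_singleton_of_mem (mem_closedBall_self hr.le)]

end PuncturedBall

theorem crossRatio_nonneg (a x b y : ℂ) : 0 ≤ crossRatio a x b y := by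
  unfold crossRatio; positivity

theorem log_one_add_crossRatio_le {a x b y : ℂ} {K : ℝ} (h : crossRatio a x b y ≤ K) :
    log (1 + crossRatio a x b y) ≤ log (1 + K) :=
  log_le_log (by linarith [crossRatio_nonneg a x b y]) (by linarith)

theorem two_mul_arth_eq_log {t : ℝ} (ht : t < 1) : 2 * arth t = log (1 + 2 * t / (1 - t)) := by
  have : 1 - t ≠ 0 := by linarith
  rw [arth, mul_div_cancel₀ _ two_ne_zero]
  congr 1
  field_simp
  ring

noncomputable def mobius (c z : ℂ) : ℂ := (z + c) / (1 + conj c * z)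

theorem mobius_zero (c : ℂ) : mobius c 0 = c := by simp [mobius]

theorem mobius_neg_self (c : ℂ) : mobius (-c) c = 0 := by simp [mobius]

theorem one_add_conj_mul_ne_zero {c z : ℂ} (hc : ‖c‖ < 1) (hz : ‖z‖ ≤ 1) :
    1 + conj c * z ≠ 0 := by
  have hcz : ‖conj c * z‖ < 1 := by
    rw [norm_mul, Complex.norm_conj]
    nlinarith [norm_nonneg c, norm_nonneg z]
  intro h
  rw [eq_neg_of_add_eq_zero_right h, norm_neg, norm_one] at hcz
  exact lt_irrefl _ hcz

theorem mobius_mobius_neg {c z : ℂ} (hc : ‖c‖ < 1) (hz : ‖z‖ ≤ 1) :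
    mobius c (mobius (-c) z) = z := by
  have hz' : 1 + conj (-c) * z ≠ 0 := one_add_conj_mul_ne_zero (by rwa [norm_neg]) hz
  have hc' : 1 - c * conj c ≠ 0 := by
    rw [Complex.mul_conj']
    exact_mod_cast (sub_pos.mpr (pow_lt_one₀ (norm_nonneg c) hc two_ne_zero)).ne'
  rw [mobius, mobius, div_add' _ _ _ hz', mul_div_assoc', one_add_div hz',
    div_div_div_cancel_right₀ hz', div_eq_iff]
  · simp only [map_neg]
    ring
  · simp only [map_neg]
    convert hc' using 1
    ring

theorem norm_one_add_conj_mul_sq_sub (c z : ℂ) :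
    ‖1 + conj c * z‖ ^ 2 - ‖z + c‖ ^ 2 = (1 - ‖c‖ ^ 2) * (1 - ‖z‖ ^ 2) := by
  simp only [Complex.sq_norm, Complex.normSq_apply, Complex.add_re, Complex.add_im,
    Complex.mul_re, Complex.mul_im, Complex.conj_re, Complex.conj_im, Complex.one_re,
    Complex.one_im]
  ring

theorem norm_mobius_of_norm_eq_one {c z : ℂ} (hc : ‖c‖ < 1) (hz : ‖z‖ = 1) :
    ‖mobius c z‖ = 1 := by
  have hd := one_add_conj_mul_ne_zero hc hz.le
  have hsq := norm_one_add_conj_mul_sq_sub c z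
  rw [hz] at hsq
  have : ‖z + c‖ = ‖1 + conj c * z‖ :=
    (pow_left_inj₀ (norm_nonneg _) (norm_nonneg _) two_ne_zero).mp (by linarith)
  rw [mobius, norm_div, this, div_self (norm_ne_zero_iff.mpr hd)]

theorem norm_mobius_lt_one {c z : ℂ} (hc : ‖c‖ < 1) (hz : ‖z‖ < 1) : ‖mobius c z‖ < 1 := by
  have hd := norm_pos_iff.mpr (one_add_conj_mul_ne_zero hc hz.le)
  have hsq := norm_one_add_conj_mul_sq_sub c z
  have hpos : 0 < (1 - ‖c‖ ^ 2) * (1 - ‖z‖ ^ 2) := by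
    apply mul_pos <;> nlinarith [norm_nonneg c, norm_nonneg z]
  rw [mobius, norm_div, div_lt_one hd]
  exact lt_of_pow_lt_pow_left₀ 2 hd.le (by linarith)

theorem norm_mobius_neg (x y : ℂ) : ‖mobius (-x) y‖ = ‖(x - y) / (1 - x * conj y)‖ := by
  rw [mobius, norm_div, norm_div, ← Complex.norm_conj (1 - x * conj y), norm_sub_rev x]
  simp [sub_eq_add_neg, mul_comm]

theorem mobius_sub_mobius {c u v : ℂ} (hu : 1 + conj c * u ≠ 0) (hv : 1 + conj c * v ≠ 0) :
    mobius c u - mobius c v =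
      (u - v) * (1 - c * conj c) / ((1 + conj c * u) * (1 + conj c * v)) := by
  rw [mobius, mobius, div_sub_div _ _ hu hv]
  ring

theorem norm_mobius_sub_mobius {c u v : ℂ} (hu : 1 + conj c * u ≠ 0)
    (hv : 1 + conj c * v ≠ 0) :
    ‖mobius c u - mobius c v‖ =
      ‖u - v‖ * |1 - ‖c‖ ^ 2| / (‖1 + conj c * u‖ * ‖1 + conj c * v‖) := by
  rw [mobius_sub_mobius hu hv, Complex.mul_conj', norm_div, norm_mul, norm_mul]
  norm_cast

theorem crossRatio_mobius {c a x b y : ℂ} (hc : ‖c‖ ≠ 1) (ha : 1 + conj c * a ≠ 0)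
    (hx : 1 + conj c * x ≠ 0) (hb : 1 + conj c * b ≠ 0) (hy : 1 + conj c * y ≠ 0) :
    crossRatio (mobius c a) (mobius c x) (mobius c b) (mobius c y) = crossRatio a x b y := by
  have hg : |1 - ‖c‖ ^ 2| ≠ 0 := by
    rw [abs_ne_zero, sub_ne_zero, ne_comm, ne_eq,
      pow_eq_one_iff_of_nonneg (norm_nonneg c) two_ne_zero]
    exact hc
  have hK : |1 - ‖c‖ ^ 2| ^ 2 / (‖1 + conj c * a‖ * ‖1 + conj c * x‖ * ‖1 + conj c * b‖ *
      ‖1 + conj c * y‖) ≠ 0 := by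
    simp only [ne_eq, div_eq_zero_iff, mul_eq_zero, norm_eq_zero, pow_eq_zero_iff two_ne_zero,
      not_or]
    exact ⟨hg, ⟨⟨⟨ha, hx⟩, hb⟩, hy⟩⟩
  rw [crossRatio, crossRatio, norm_mobius_sub_mobius ha hb, norm_mobius_sub_mobius hx hy,
    norm_mobius_sub_mobius ha hx, norm_mobius_sub_mobius hb hy,
    ← mul_div_mul_right (‖a - b‖ * ‖x - y‖) (‖a - x‖ * ‖b - y‖) hK]
  congr 1 <;> ring

theorem crossRatio_zero_le {a b w : ℂ} (ha : ‖a‖ = 1) (hb : ‖b‖ = 1) (hw : ‖w‖ < 1) :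
    crossRatio a 0 b w ≤ 2 * ‖w‖ / (1 - ‖w‖) := by
  have hbw : 1 - ‖w‖ ≤ ‖b - w‖ := by simpa [hb] using norm_sub_norm_le b w
  have hab : ‖a - b‖ ≤ 2 := by simpa [ha, hb, one_add_one_eq_two] using norm_sub_le a b
  rw [crossRatio, sub_zero, zero_sub, norm_neg, ha, one_mul]
  gcongr

theorem exists_crossRatio_zero_eq {w : ℂ} (hw : ‖w‖ < 1) :
    ∃ a b : ℂ, ‖a‖ = 1 ∧ ‖b‖ = 1 ∧ crossRatio a 0 b w = 2 * ‖w‖ / (1 - ‖w‖) := by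
  rcases eq_or_ne w 0 with rfl | hw0
  · exact ⟨1, 1, norm_one, norm_one, by simp [crossRatio]⟩
  set u : ℂ := w / ‖w‖
  have hu : ‖u‖ = 1 := by
    simp [u, norm_ne_zero_iff.mpr hw0]
  have huw : u - w = u * ((1 - ‖w‖ : ℝ) : ℂ) := by
    have : u * ‖w‖ = w := div_mul_cancel₀ _ (by exact_mod_cast norm_ne_zero_iff.mpr hw0)
    push_cast
    linear_combination this
  refine ⟨-u, u, by rw [norm_neg, hu], hu, ?_⟩
  rw [crossRatio, huw, sub_zero, neg_sub_left, norm_neg, norm_neg, ← two_mul, norm_mul,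
    norm_mul, hu, Complex.norm_real, Real.norm_eq_abs, abs_of_pos (by linarith)]
  simp

theorem crossRatio_le_of_norm_eq_one {a x b y : ℂ} (ha : ‖a‖ = 1) (hb : ‖b‖ = 1)
    (hx : ‖x‖ < 1) (hy : ‖y‖ < 1) :
    crossRatio a x b y ≤ 2 * ‖mobius (-x) y‖ / (1 - ‖mobius (-x) y‖) := by
  have hx' : ‖-x‖ < 1 := by rwa [norm_neg]
  have hden {z : ℂ} (hz : ‖z‖ ≤ 1) := one_add_conj_mul_ne_zero hx' hz
  rw [← crossRatio_mobius hx'.ne (hden ha.le) (hden hx.le) (hden hb.le) (hden hy.le),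
    mobius_neg_self]
  exact crossRatio_zero_le (norm_mobius_of_norm_eq_one hx' ha)
    (norm_mobius_of_norm_eq_one hx' hb) (norm_mobius_lt_one hx' hy)

theorem exists_crossRatio_eq_of_norm_lt_one {x y : ℂ} (hx : ‖x‖ < 1) (hy : ‖y‖ < 1) :
    ∃ a b : ℂ, ‖a‖ = 1 ∧ ‖b‖ = 1 ∧
      crossRatio a x b y = 2 * ‖mobius (-x) y‖ / (1 - ‖mobius (-x) y‖) := by
  have hw : ‖mobius (-x) y‖ < 1 := norm_mobius_lt_one (by rwa [norm_neg]) hy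
  obtain ⟨a, b, ha, hb, hab⟩ := exists_crossRatio_zero_eq hw
  have hden {z : ℂ} (hz : ‖z‖ ≤ 1) := one_add_conj_mul_ne_zero hx hz
  refine ⟨mobius x a, mobius x b, norm_mobius_of_norm_eq_one hx ha,
    norm_mobius_of_norm_eq_one hx hb, ?_⟩
  have h := crossRatio_mobius hx.ne (hden ha.le) (hden (norm_zero.trans_le zero_le_one))
    (hden hb.le) (hden hw.le)
  rwa [mobius_zero, mobius_mobius_neg hx hy.le, hab] at h

theorem crossRatio_zero_right_le {a x y : ℂ} (ha : ‖a‖ = 1) (hx : ‖x‖ < 1) (hy : y ≠ 0) :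
    crossRatio a x 0 y ≤ ‖x - y‖ / ((1 - ‖x‖) * ‖y‖) := by
  have hax : 1 - ‖x‖ ≤ ‖a - x‖ := by simpa [ha] using norm_sub_norm_le a x
  rw [crossRatio, sub_zero, zero_sub, norm_neg, ha, one_mul]
  have : 0 < (1 - ‖x‖) * ‖y‖ := mul_pos (by linarith) (norm_pos_iff.mpr hy)
  gcongr

theorem crossRatio_div_norm_self {x y : ℂ} (hx : ‖x‖ < 1) (hx0 : x ≠ 0) :
    crossRatio (x / ‖x‖) x 0 y = ‖x - y‖ / ((1 - ‖x‖) * ‖y‖) := by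
  have hnx : (‖x‖ : ℂ) ≠ 0 := by exact_mod_cast norm_ne_zero_iff.mpr hx0
  have hu : ‖x / ‖x‖‖ = 1 := by simp [norm_ne_zero_iff.mpr hx0]
  have hux : x / ‖x‖ - x = x / ‖x‖ * ((1 - ‖x‖ : ℝ) : ℂ) := by
    have : x / ‖x‖ * ‖x‖ = x := div_mul_cancel₀ _ hnx
    push_cast
    linear_combination this
  rw [crossRatio, hux, sub_zero, zero_sub, norm_neg, norm_mul, hu, one_mul, one_mul,
    Complex.norm_real, Real.norm_eq_abs, abs_of_pos (by linarith)]

theorem crossRatio_zero_left_le {b x y : ℂ} (hb : ‖b‖ = 1) (hx : ‖x‖ < 1) (hy : y ≠ 0)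
    (hyx : ‖y‖ ≤ ‖x‖) : crossRatio 0 x b y ≤ ‖x - y‖ / ((1 - ‖x‖) * ‖y‖) := by
  have hby : 1 - ‖y‖ ≤ ‖b - y‖ := by simpa [hb] using norm_sub_norm_le b y
  have hpos : 0 < (1 - ‖x‖) * ‖y‖ := mul_pos (by linarith) (norm_pos_iff.mpr hy)
  rw [crossRatio, zero_sub, zero_sub, norm_neg, norm_neg, hb, one_mul]
  refine div_le_div_of_nonneg_left (norm_nonneg _) hpos ?_
  calc (1 - ‖x‖) * ‖y‖ ≤ ‖x‖ * (1 - ‖y‖) := by nlinarith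
    _ ≤ ‖x‖ * ‖b - y‖ := by gcongr

theorem csSup_eq_max_of_mem {s : Set ℝ} {a b : ℝ} (ha : a ∈ s) (hb : b ∈ s)
    (h : ∀ z ∈ s, z ≤ max a b) : sSup s = max a b :=
  IsGreatest.csSup_eq ⟨by rcases max_choice a b with hab | hab <;> rwa [hab], h⟩

/-- For `x,y` in the punctured unit disk with `|y| ≤ |x|`,
`δ_{𝔹²∖{0}}(x,y) = max{ ρ_{𝔹²}(x,y), log(1 + |x-y|/((1-|x|)|y|)) }`. -/
theorem stmt12 (x y : ℂ) (hx : x ∈ Metric.ball (0 : ℂ) 1 \ {0})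
    (hy : y ∈ Metric.ball (0 : ℂ) 1 \ {0}) (hle : ‖y‖ ≤ ‖x‖) :
    deltaMetric (Metric.ball (0 : ℂ) 1 \ {0}) x y =
      max (rhoDisk x y)
        (Real.log (1 + ‖x - y‖ / ((1 - ‖x‖) * ‖y‖))) := by
  simp only [mem_sdiff, mem_ball_zero_iff, mem_singleton_iff] at hx hy
  obtain ⟨hx1, hx0⟩ := hx
  obtain ⟨hy1, hy0⟩ := hy
  obtain ⟨a₀, b₀, ha₀, hb₀, hab₀⟩ := exists_crossRatio_eq_of_norm_lt_one hx1 hy1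
  set m := ‖mobius (-x) y‖
  have hm : m < 1 := norm_mobius_lt_one (by rwa [norm_neg]) hy1
  have hrho : rhoDisk x y = log (1 + 2 * m / (1 - m)) := by
    rw [rhoDisk, ← norm_mobius_neg, two_mul_arth_eq_log hm]
  have hx_sphere : x / ‖x‖ ∈ sphere (0 : ℂ) 1 := by simp [norm_ne_zero_iff.mpr hx0]
  rw [hrho, deltaMetric, frontier_ball_sdiff_center 0 one_pos]
  refine csSup_eq_max_of_mem ?_ ?_ ?_
  · exact ⟨(a₀, b₀), ⟨.inl (by simpa using ha₀), .inl (by simpa using hb₀)⟩, by simp only [hab₀]⟩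
  · exact ⟨(x / ‖x‖, 0), ⟨.inl hx_sphere, .inr rfl⟩,
      by simp only [crossRatio_div_norm_self hx1 hx0]⟩
  rintro _ ⟨⟨a, b⟩, ⟨ha | ha, hb | hb⟩, rfl⟩ <;>
    simp only [mem_sphere_zero_iff_norm, mem_singleton_iff] at ha hb
  · exact le_max_of_le_left <| log_one_add_crossRatio_le <|
      crossRatio_le_of_norm_eq_one ha hb hx1 hy1
  · exact le_max_of_le_right <| log_one_add_crossRatio_le <|
      hb ▸ crossRatio_zero_right_le ha hx1 hy0
  · exact le_max_of_le_right <| log_one_add_crossRatio_le <|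
      ha ▸ crossRatio_zero_left_le hb hx1 hy0 hle
  · refine le_max_of_le_left (log_one_add_crossRatio_le ?_)
    simp only [ha, hb, crossRatio, sub_self, norm_zero, zero_mul, zero_div]
    exact div_nonneg (by positivity) (by linarith)
end

section
/- For all $x,y \in \mathbb{B}^2\setminus\{0\}$: $\frac{1}{2}s_{\mathbb{B}^2\setminus\{0\}}(x,y) \le j^*_{\mathbb{B}^2\setminus\{0\}}(x,y) \le \mathrm{th}\frac{\delta_{\mathbb{B}^2\setminus\{0\}}(x,y)}{2} \le 2 j^*_{\mathbb{B}^2\setminus\{0\}}(x,y) \le 2 s_{\mathbb{B}^2\setminus\{0\}}(x,y)$. -/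
open Real Set

/-! With `t = |x - y|` and `m = min {d(x), d(y)}`, the triangle inequality squeezes the
denominator of `s` between `max {t, 2m}` and `t + 2m`, which gives the two outer inequalities.
For the inner ones, `j* = th (j / 2)` for `j = log (1 + t / m)`, and `j ≤ δ ≤ 2j`: the upper bound
again by the triangle inequality, the lower one by choosing `a` a boundary point nearest to `x` and
`b` the point where the ray from `a` through `y` leaves the disk. Finally
`th (δ / 2) ≤ th j ≤ 2 th (j / 2)`. -/

open Metric

namespace Real

theorem tanh_strictMono : StrictMono tanh := fun a b hab => by
  rwa [← artanh_lt_artanh_iff ⟨neg_one_lt_tanh a, tanh_lt_one a⟩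
    ⟨neg_one_lt_tanh b, tanh_lt_one b⟩, artanh_tanh, artanh_tanh]

theorem tanh_half_eq (v : ℝ) : tanh (v / 2) = (exp v - 1) / (exp v + 1) := by
  have hv : exp v = exp (v / 2) ^ 2 := by rw [← exp_nat_mul]; ring_nf
  rw [tanh_eq, exp_neg, hv]
  field_simp

theorem tanh_le_two_mul_tanh_half {u : ℝ} (hu : 0 ≤ u) : tanh u ≤ 2 * tanh (u / 2) := by
  have hE : 1 ≤ exp u := one_le_exp hu
  have htanh : tanh u = (exp u ^ 2 - 1) / (exp u ^ 2 + 1) := by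
    rw [← exp_nat_mul, ← tanh_half_eq]; ring_nf
  have hdiff : 2 * ((exp u - 1) / (exp u + 1)) - (exp u ^ 2 - 1) / (exp u ^ 2 + 1)
      = (exp u - 1) ^ 3 / ((exp u + 1) * (exp u ^ 2 + 1)) := by
    field_simp; ring
  rw [htanh, tanh_half_eq]
  linarith [div_nonneg (pow_nonneg (sub_nonneg.2 hE) 3)
    (by positivity : (0 : ℝ) ≤ (exp u + 1) * (exp u ^ 2 + 1))]

end Real

theorem infDist_frontier_pos {G : Set ℂ} {x : ℂ} (hG : IsOpen G) (hF : (frontier G).Nonempty)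
    (hx : x ∈ G) : 0 < infDist x (frontier G) :=
  (isClosed_frontier.notMem_iff_infDist_pos hF).1 fun h => hG.inter_frontier_eq.subset ⟨hx, h⟩

theorem sphere_subset_frontier_ball_sdiff_singleton {E : Type*} [NormedAddCommGroup E]
    [NormedSpace ℝ E] {c p : E} {r : ℝ} (hp : p ∈ ball c r) :
    sphere c r ⊆ frontier (ball c r \ {p}) := by
  intro z hz
  have hr : r ≠ 0 := (pos_of_mem_ball hp).ne'
  have hz_notMem_ball : z ∉ ball c r := fun h => (mem_sphere.1 hz).not_lt (mem_ball.1 h)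
  rw [(isOpen_ball.sdiff isClosed_singleton).frontier_eq]
  refine ⟨closure_sdiff ⟨?_, ?_⟩, fun h => hz_notMem_ball h.1⟩
  · rw [closure_ball c hr]; exact sphere_subset_closedBall hz
  · rw [closure_singleton]; rintro rfl; exact hz_notMem_ball hp

section TriangularRatio

variable {F : Set ℂ} (x y : ℂ)

theorem norm_sub_le_sInf_triangle (hF : F.Nonempty) :
    ‖x - y‖ ≤ sInf ((fun z => ‖x - z‖ + ‖z - y‖) '' F) :=
  le_csInf (hF.image _) <| by
    rintro _ ⟨z, -, rfl⟩; exact norm_sub_le_norm_sub_add_norm_sub x z y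

theorem two_mul_min_infDist_le_sInf_triangle (hF : F.Nonempty) :
    2 * min (infDist x F) (infDist y F) ≤ sInf ((fun z => ‖x - z‖ + ‖z - y‖) '' F) := by
  refine le_csInf (hF.image _) ?_
  rintro _ ⟨z, hz, rfl⟩
  have hxz : infDist x F ≤ ‖x - z‖ := by rw [← dist_eq_norm]; exact infDist_le_dist_of_mem hz
  have hyz : infDist y F ≤ ‖z - y‖ := by
    rw [← dist_eq_norm, dist_comm]; exact infDist_le_dist_of_mem hz
  linarith [min_le_left (infDist x F) (infDist y F), min_le_right (infDist x F) (infDist y F)]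

theorem sInf_triangle_le_add_two_mul_min_infDist (hF : F.Nonempty) :
    sInf ((fun z => ‖x - z‖ + ‖z - y‖) '' F) ≤
      ‖x - y‖ + 2 * min (infDist x F) (infDist y F) := by
  set S := sInf ((fun z => ‖x - z‖ + ‖z - y‖) '' F)
  have hS : ∀ z ∈ F, S ≤ ‖x - z‖ + ‖z - y‖ := fun z hz =>
    csInf_le ⟨0, by rintro _ ⟨w, -, rfl⟩; positivity⟩ ⟨z, hz, rfl⟩
  have hx : (S - ‖x - y‖) / 2 ≤ infDist x F := by
    refine (le_infDist hF).2 fun z hz => ?_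
    rw [dist_eq_norm]
    linarith [hS z hz, norm_sub_le_norm_sub_add_norm_sub z x y, norm_sub_rev z x]
  have hy : (S - ‖x - y‖) / 2 ≤ infDist y F := by
    refine (le_infDist hF).2 fun z hz => ?_
    rw [dist_eq_norm]
    linarith [hS z hz, norm_sub_le_norm_sub_add_norm_sub x y z, norm_sub_rev z y]
  linarith [le_min hx hy]

variable {G : Set ℂ} {x y}

theorem nonempty_frontier_of_min_infDist_pos
    (hm : 0 < min (infDist x (frontier G)) (infDist y (frontier G))) : (frontier G).Nonempty := by
  rw [nonempty_iff_ne_empty]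
  rintro h
  simp [h] at hm

theorem jStar_le_sMetric (hm : 0 < min (infDist x (frontier G)) (infDist y (frontier G))) :
    jStar G x y ≤ sMetric G x y := by
  have hF := nonempty_frontier_of_min_infDist_pos hm
  exact div_le_div_of_nonneg_left (norm_nonneg _)
    (by linarith [two_mul_min_infDist_le_sInf_triangle x y hF])
    (sInf_triangle_le_add_two_mul_min_infDist x y hF)

theorem sMetric_le_two_mul_jStar
    (hm : 0 < min (infDist x (frontier G)) (infDist y (frontier G))) :
    sMetric G x y ≤ 2 * jStar G x y := by
  have hF := nonempty_frontier_of_min_infDist_pos hm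
  have ht := norm_nonneg (x - y)
  rw [jStar, sMetric, mul_div_left_comm, ← mul_div_assoc, ← div_div_eq_mul_div]
  exact div_le_div_of_nonneg_left ht (by positivity)
    (by linarith [norm_sub_le_sInf_triangle x y hF, two_mul_min_infDist_le_sInf_triangle x y hF])

end TriangularRatio

noncomputable def jMetric (G : Set ℂ) (x y : ℂ) : ℝ :=
  Real.log (1 + ‖x - y‖ / min (infDist x (frontier G)) (infDist y (frontier G)))

section DistanceRatio

variable {G : Set ℂ} {x y : ℂ}

theorem jMetric_nonneg : 0 ≤ jMetric G x y :=
  log_nonneg <| le_add_of_nonneg_right <|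
    div_nonneg (norm_nonneg _) (le_min infDist_nonneg infDist_nonneg)

theorem jStar_eq_tanh_half_jMetric
    (hm : 0 < min (infDist x (frontier G)) (infDist y (frontier G))) :
    jStar G x y = tanh (jMetric G x y / 2) := by
  have ht := norm_nonneg (x - y)
  rw [jStar, jMetric, tanh_half_eq, exp_log (by positivity)]
  field_simp
  ring

theorem crossRatio_comm (a b x y : ℂ) : crossRatio a y b x = crossRatio b x a y := by
  rw [crossRatio, crossRatio, norm_sub_rev a b, norm_sub_rev y x, norm_sub_rev a y,
    norm_sub_rev b x, mul_comm ‖y - a‖]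

theorem one_add_crossRatio_le {a b : ℂ} {m : ℝ} (hm : 0 < m) (ha : m ≤ ‖a - x‖)
    (hb : m ≤ ‖b - y‖) :
    1 + crossRatio a x b y ≤ (1 + ‖x - y‖ / m) ^ 2 := by
  have hab : ‖a - b‖ ≤ ‖a - x‖ + ‖x - y‖ + ‖b - y‖ := by
    linarith [norm_sub_le_norm_sub_add_norm_sub a y b, norm_sub_le_norm_sub_add_norm_sub a x y,
      norm_sub_rev b y]
  have hp : 0 < ‖a - x‖ := hm.trans_le ha
  have hq : 0 < ‖b - y‖ := hm.trans_le hb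
  calc 1 + crossRatio a x b y
      ≤ 1 + (‖a - x‖ + ‖x - y‖ + ‖b - y‖) * ‖x - y‖ / (‖a - x‖ * ‖b - y‖) := by
        rw [crossRatio]; gcongr
    _ = 1 + ‖x - y‖ / ‖b - y‖ + ‖x - y‖ / ‖a - x‖ +
          ‖x - y‖ ^ 2 / (‖a - x‖ * ‖b - y‖) := by
        field_simp; ring
    _ ≤ 1 + ‖x - y‖ / m + ‖x - y‖ / m + ‖x - y‖ ^ 2 / (m * m) := by gcongr
    _ = (1 + ‖x - y‖ / m) ^ 2 := by ring

theorem log_one_add_crossRatio_le_two_mul_jMetric {a b : ℂ}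
    (hm : 0 < min (infDist x (frontier G)) (infDist y (frontier G)))
    (ha : a ∈ frontier G) (hb : b ∈ frontier G) :
    Real.log (1 + crossRatio a x b y) ≤ 2 * jMetric G x y := by
  have hax : min (infDist x (frontier G)) (infDist y (frontier G)) ≤ ‖a - x‖ := by
    rw [← dist_eq_norm, dist_comm]; exact (min_le_left _ _).trans (infDist_le_dist_of_mem ha)
  have hby : min (infDist x (frontier G)) (infDist y (frontier G)) ≤ ‖b - y‖ := by
    rw [← dist_eq_norm, dist_comm]; exact (min_le_right _ _).trans (infDist_le_dist_of_mem hb)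
  calc Real.log (1 + crossRatio a x b y)
      ≤ Real.log ((1 + ‖x - y‖ / min (infDist x (frontier G)) (infDist y (frontier G))) ^ 2) :=
        log_le_log (by unfold crossRatio; positivity) (one_add_crossRatio_le hm hax hby)
    _ = 2 * jMetric G x y := by rw [log_pow, jMetric]; norm_num

theorem deltaMetric_le_two_mul_jMetric
    (hm : 0 < min (infDist x (frontier G)) (infDist y (frontier G))) :
    deltaMetric G x y ≤ 2 * jMetric G x y :=
  Real.sSup_le (fun _ ⟨⟨_, _⟩, ⟨ha, hb⟩, hδ⟩ =>
    hδ ▸ log_one_add_crossRatio_le_two_mul_jMetric hm ha hb) (mul_nonneg zero_le_two jMetric_nonneg)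

theorem div_le_crossRatio {a b : ℂ} (hax : 0 < ‖a - x‖) (hby : 0 < ‖b - y‖)
    (hab : ‖b - y‖ ≤ ‖a - b‖) : ‖x - y‖ / ‖a - x‖ ≤ crossRatio a x b y := by
  rw [crossRatio, mul_comm ‖a - b‖, mul_div_mul_comm]
  exact le_mul_of_one_le_right (by positivity) ((one_le_div hby).2 hab)

end DistanceRatio

theorem exists_norm_eq_and_mem_segment {E : Type*} [NormedAddCommGroup E] [NormedSpace ℝ E]
    {a y : E} {r : ℝ} (hy : ‖y‖ ≤ r) (hya : y ≠ a) :
    ∃ b, ‖b‖ = r ∧ y ∈ segment ℝ a b := by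
  set v := y - a
  have hv : 0 < ‖v‖ := norm_pos_iff.2 (sub_ne_zero.2 hya)
  set s₀ := (r + ‖a‖) / ‖v‖
  have hs₀ : 1 ≤ s₀ := (one_le_div hv).2 (by linarith [norm_sub_le y a])
  have hf : ContinuousOn (fun s : ℝ => ‖a + s • v‖) (Icc 1 s₀) := by fun_prop
  have hf_one : ‖a + (1 : ℝ) • v‖ ≤ r := by simpa [v] using hy
  have hf_s₀ : r ≤ ‖a + s₀ • v‖ := by
    have hs₀v : ‖s₀ • v‖ = r + ‖a‖ := by
      rw [norm_smul, Real.norm_of_nonneg (by linarith), div_mul_cancel₀ _ hv.ne']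
    have htri := norm_sub_le (a + s₀ • v) a
    rw [add_sub_cancel_left, hs₀v] at htri
    linarith
  obtain ⟨s, hs, hsr⟩ := intermediate_value_Icc hs₀ hf ⟨hf_one, hf_s₀⟩
  have hs0 : s ≠ 0 := by linarith [hs.1]
  refine ⟨a + s • v, hsr, ?_⟩
  rw [segment_eq_image']
  refine ⟨s⁻¹, ⟨inv_nonneg.2 (by linarith [hs.1]), inv_le_one_of_one_le₀ hs.1⟩, ?_⟩
  simp only [add_sub_cancel_left, smul_smul, inv_mul_cancel₀ hs0, one_smul, v, add_sub_cancel]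

section UnitDisk

variable {G : Set ℂ} {x y : ℂ}

theorem exists_crossRatio_ge_of_infDist_le (hsph : sphere 0 1 ⊆ frontier G)
    (hy : ‖y‖ < 1) (hx : 0 < infDist x (frontier G))
    (hxy : infDist x (frontier G) ≤ infDist y (frontier G)) :
    ∃ a ∈ frontier G, ∃ b ∈ frontier G,
      ‖x - y‖ / infDist x (frontier G) ≤ crossRatio a x b y := by
  have hF : (frontier G).Nonempty := ⟨1, hsph (by simp)⟩
  obtain ⟨a, ha, hax⟩ := isClosed_frontier.exists_infDist_eq_dist hF x
  have hya : y ≠ a := by rintro rfl; linarith [infDist_zero_of_mem (x := y) ha]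
  obtain ⟨b, hb, hyab⟩ := exists_norm_eq_and_mem_segment hy.le hya
  have habyb := dist_add_dist_of_mem_segment hyab
  rw [dist_eq_norm, dist_eq_norm, dist_eq_norm, norm_sub_rev y b] at habyb
  refine ⟨a, ha, b, hsph (mem_sphere_zero_iff_norm.2 hb), ?_⟩
  have hax' : infDist x (frontier G) = ‖a - x‖ := by rw [hax, dist_eq_norm, norm_sub_rev]
  rw [hax'] at hx ⊢
  exact div_le_crossRatio hx (by linarith [norm_sub_norm_le b y])
    (by linarith [norm_nonneg (a - y)])

theorem jMetric_le_deltaMetric (hsph : sphere 0 1 ⊆ frontier G) (hx : ‖x‖ < 1) (hy : ‖y‖ < 1)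
    (hm : 0 < min (infDist x (frontier G)) (infDist y (frontier G))) :
    jMetric G x y ≤ deltaMetric G x y := by
  obtain ⟨a, ha, b, hb, hab⟩ : ∃ a ∈ frontier G, ∃ b ∈ frontier G,
      ‖x - y‖ / min (infDist x (frontier G)) (infDist y (frontier G)) ≤ crossRatio a x b y := by
    rcases le_total (infDist x (frontier G)) (infDist y (frontier G)) with h | h
    · rw [min_eq_left h]
      exact exists_crossRatio_ge_of_infDist_le hsph hy (hm.trans_le (min_le_left _ _)) h
    · obtain ⟨a, ha, b, hb, hab⟩ :=
        exists_crossRatio_ge_of_infDist_le hsph hx (hm.trans_le (min_le_right _ _)) h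
      refine ⟨b, hb, a, ha, ?_⟩
      rwa [min_eq_right h, ← crossRatio_comm, norm_sub_rev]
  have hbdd : BddAbove ((fun p : ℂ × ℂ => Real.log (1 + crossRatio p.1 x p.2 y)) ''
      (frontier G ×ˢ frontier G)) :=
    ⟨2 * jMetric G x y, by
      rintro _ ⟨⟨a, b⟩, ⟨ha, hb⟩, rfl⟩; exact log_one_add_crossRatio_le_two_mul_jMetric hm ha hb⟩
  exact (log_le_log (by positivity) (by linarith)).trans
    (le_csSup hbdd ⟨(a, b), ⟨ha, hb⟩, rfl⟩)

end UnitDisk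

/-- The sharp inequality chain
`(1/2)s ≤ j* ≤ th(δ/2) ≤ 2j* ≤ 2s` in the punctured unit disk. -/
theorem stmt13 (x y : ℂ) (hx : x ∈ Metric.ball (0 : ℂ) 1 \ {0})
    (hy : y ∈ Metric.ball (0 : ℂ) 1 \ {0}) :
    (1 / 2) * sMetric (Metric.ball (0 : ℂ) 1 \ {0}) x y
        ≤ jStar (Metric.ball (0 : ℂ) 1 \ {0}) x y ∧
    jStar (Metric.ball (0 : ℂ) 1 \ {0}) x y
        ≤ Real.tanh (deltaMetric (Metric.ball (0 : ℂ) 1 \ {0}) x y / 2) ∧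
    Real.tanh (deltaMetric (Metric.ball (0 : ℂ) 1 \ {0}) x y / 2)
        ≤ 2 * jStar (Metric.ball (0 : ℂ) 1 \ {0}) x y ∧
    2 * jStar (Metric.ball (0 : ℂ) 1 \ {0}) x y
        ≤ 2 * sMetric (Metric.ball (0 : ℂ) 1 \ {0}) x y := by
  set G := Metric.ball (0 : ℂ) 1 \ {0}
  have hG : IsOpen G := isOpen_ball.sdiff isClosed_singleton
  have hsph : sphere (0 : ℂ) 1 ⊆ frontier G :=
    sphere_subset_frontier_ball_sdiff_singleton (mem_ball_self one_pos)
  have hF : (frontier G).Nonempty := ⟨1, hsph (by simp)⟩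
  have hm : 0 < min (infDist x (frontier G)) (infDist y (frontier G)) :=
    lt_min (infDist_frontier_pos hG hF hx) (infDist_frontier_pos hG hF hy)
  have hjδ :=
    jMetric_le_deltaMetric hsph (mem_ball_zero_iff.1 hx.1) (mem_ball_zero_iff.1 hy.1) hm
  have hδj := deltaMetric_le_two_mul_jMetric hm
  refine ⟨by linarith [sMetric_le_two_mul_jStar hm], ?_, ?_, by linarith [jStar_le_sMetric hm]⟩
  · rw [jStar_eq_tanh_half_jMetric hm]
    exact tanh_strictMono.monotone (by linarith)
  · rw [jStar_eq_tanh_half_jMetric hm]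
    calc tanh (deltaMetric G x y / 2)
        ≤ tanh (jMetric G x y) := tanh_strictMono.monotone (by linarith)
      _ ≤ 2 * tanh (jMetric G x y / 2) := tanh_le_two_mul_tanh_half jMetric_nonneg
end

section
/- For a line segment $[u,v]$ contained in a domain $G\subset\mathbb{R}$ with at least two points in $\mathbb{R}\setminus G$, the $\delta_G$-diameter of $[u,v]$ equals $\delta_G(u,v)$, i.e. $\sup_{x,y\in[u,v]}\delta_G(x,y) = \delta_G(u,v)$. -/
open Real Set

/-- The cross-ratio `|a,x,b,y|` of real numbers. -/
noncomputable def crossRatioR (a x b y : ℝ) : ℝ := (|a - b| * |x - y|) / (|a - x| * |b - y|)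

/-- The Möbius metric `δ_G` for `G ⊆ ℝ`. -/
noncomputable def deltaR (G : Set ℝ) (x y : ℝ) : ℝ :=
  sSup ((fun p : ℝ × ℝ => Real.log (1 + crossRatioR p.1 x p.2 y)) '' (frontier G ×ˢ frontier G))

/-! For boundary points `a, b` outside `[u, v]` and `u ≤ x ≤ y ≤ v`, moving `x` out to `u` and
then `y` out to `v` increases `|x - y| / |a - x|` and `|x - y| / |b - y|` respectively, so the
cross ratio `|a,x,b,y|` is dominated by `|a,u,b,v|`. Taking suprema over the boundary, and using
the symmetry of `δ_G`, every `δ_G(x, y)` with `x, y ∈ [u, v]` is at most `δ_G(u, v)`; the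
supremum defining `δ_G(u, v)` is finite (not a junk `sSup`) because `u` and `v` lie at positive
distance from `∂G`. -/

lemma crossRatioR_nonneg (a x b y : ℝ) : 0 ≤ crossRatioR a x b y := by
  unfold crossRatioR
  positivity

lemma crossRatioR_comm (a x b y : ℝ) : crossRatioR a x b y = crossRatioR b y a x := by
  unfold crossRatioR
  rw [abs_sub_comm a b, abs_sub_comm x y, mul_comm |a - x|]

lemma crossRatioR_le_of_le_abs_sub {a b x y ε : ℝ} (hε : 0 < ε) (hax : ε ≤ |a - x|)
    (hby : ε ≤ |b - y|) :
    crossRatioR a x b y ≤ |x - y| * (1 / ε + |x - y| / (ε * ε) + 1 / ε) := by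
  have hax₀ : 0 < |a - x| := hε.trans_le hax
  have hby₀ : 0 < |b - y| := hε.trans_le hby
  have hab : |a - b| ≤ |a - x| + |x - y| + |b - y| := by
    have hxb := abs_sub_le x y b
    rw [abs_sub_comm y b] at hxb
    linarith [abs_sub_le a x b]
  calc crossRatioR a x b y
      ≤ (|a - x| + |x - y| + |b - y|) * |x - y| / (|a - x| * |b - y|) := by
        unfold crossRatioR; gcongr
    _ = |x - y| * (1 / |b - y| + |x - y| / (|a - x| * |b - y|) + 1 / |a - x|) := by
        field_simp
    _ ≤ |x - y| * (1 / ε + |x - y| / (ε * ε) + 1 / ε) := by gcongr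

lemma bddAbove_log_one_add_crossRatioR {G : Set ℝ} {x y : ℝ} (hx : x ∉ frontier G)
    (hy : y ∉ frontier G) :
    BddAbove ((fun p : ℝ × ℝ => Real.log (1 + crossRatioR p.1 x p.2 y)) ''
      (frontier G ×ˢ frontier G)) := by
  obtain ⟨εx, hεx, hballx⟩ := Metric.isOpen_iff.1 isClosed_frontier.isOpen_compl x hx
  obtain ⟨εy, hεy, hbally⟩ := Metric.isOpen_iff.1 isClosed_frontier.isOpen_compl y hy
  have far {ε z a : ℝ} (hball : Metric.ball z ε ⊆ (frontier G)ᶜ) (ha : a ∈ frontier G) :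
      ε ≤ |a - z| := by
    by_contra! h
    exact hball (by rwa [Metric.mem_ball, Real.dist_eq]) ha
  refine ⟨Real.log (1 + |x - y| * (1 / min εx εy + |x - y| / (min εx εy * min εx εy)
    + 1 / min εx εy)), forall_mem_image.2 fun ⟨a, b⟩ ⟨ha, hb⟩ => ?_⟩
  have hcr := crossRatioR_le_of_le_abs_sub (lt_min hεx hεy)
    ((min_le_left _ _).trans (far hballx ha)) ((min_le_right _ _).trans (far hbally hb))
  exact Real.log_le_log (by linarith [crossRatioR_nonneg a x b y]) (by linarith)

lemma deltaR_nonneg (G : Set ℝ) (x y : ℝ) : 0 ≤ deltaR G x y :=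
  Real.sSup_nonneg <| forall_mem_image.2 fun p _ =>
    Real.log_nonneg (by linarith [crossRatioR_nonneg p.1 x p.2 y])

lemma deltaR_comm (G : Set ℝ) (x y : ℝ) : deltaR G x y = deltaR G y x := by
  unfold deltaR
  congr 1
  ext r
  constructor <;> rintro ⟨⟨a, b⟩, ⟨ha, hb⟩, rfl⟩ <;>
    exact ⟨(b, a), ⟨hb, ha⟩, by dsimp only; rw [crossRatioR_comm]⟩

lemma sub_mul_abs_le_sub_mul_abs {a u x y : ℝ} (hux : u ≤ x) (hxy : x ≤ y)
    (ha : a ∉ Icc u y) :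
    (y - x) * |a - u| ≤ (y - u) * |a - x| := by
  rcases lt_or_ge a u with hau | hua
  · rw [abs_of_neg (by linarith), abs_of_neg (by linarith)]
    nlinarith
  · have hya : y < a := lt_of_not_ge fun hay => ha ⟨hua, hay⟩
    rw [abs_of_pos (by linarith), abs_of_pos (by linarith)]
    nlinarith

lemma crossRatioR_le_crossRatioR_of_mem_Icc {a b u v x y : ℝ} (ha : a ∉ Icc u v)
    (hb : b ∉ Icc u v) (hx : x ∈ Icc u v) (hy : y ∈ Icc u v) (hxy : x ≤ y) :
    crossRatioR a x b y ≤ crossRatioR a u b v := by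
  have hmove_x : (y - x) * |a - u| ≤ (y - u) * |a - x| :=
    sub_mul_abs_le_sub_mul_abs hx.1 hxy fun h => ha ⟨h.1, h.2.trans hy.2⟩
  -- the same monotonicity, for the reflected configuration `t ↦ -t`
  have hmove_y : (y - u) * |b - v| ≤ (v - u) * |b - y| := by
    have := sub_mul_abs_le_sub_mul_abs (neg_le_neg hy.2) (neg_le_neg hy.1) (a := -b)
      fun h => hb ⟨by linarith [h.2], by linarith [h.1]⟩
    rwa [neg_sub_neg, neg_sub_neg, neg_sub_neg, neg_sub_neg, abs_sub_comm v, abs_sub_comm y] at this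
  have huv : u ≤ v := hx.1.trans hx.2
  have habs {s t : ℝ} (h : s ≤ t) : |s - t| = t - s := by
    rw [abs_sub_comm, abs_of_nonneg (sub_nonneg.2 h)]
  have hpos {z : ℝ} (hz : z ∈ Icc u v) {c : ℝ} (hc : c ∉ Icc u v) : 0 < |c - z| :=
    abs_pos.2 (sub_ne_zero.2 fun h => hc (h ▸ hz))
  have hax := hpos hx ha
  have hby := hpos hy hb
  have hau := hpos (left_mem_Icc.2 huv) ha
  have hbv := hpos (right_mem_Icc.2 huv) hb
  unfold crossRatioR
  rw [div_le_div_iff₀ (by positivity) (by positivity), habs hxy, habs huv]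
  calc |a - b| * (y - x) * (|a - u| * |b - v|)
      = |a - b| * ((y - x) * |a - u| * |b - v|) := by ring
    _ ≤ |a - b| * ((y - u) * |a - x| * |b - v|) := by gcongr
    _ = |a - b| * ((y - u) * |b - v| * |a - x|) := by ring
    _ ≤ |a - b| * ((v - u) * |b - y| * |a - x|) := by gcongr
    _ = |a - b| * (v - u) * (|a - x| * |b - y|) := by ring

lemma deltaR_le_deltaR_of_mem_Icc {G : Set ℝ} {u v x y : ℝ}
    (hfr : ∀ a ∈ frontier G, a ∉ Icc u v) (hx : x ∈ Icc u v) (hy : y ∈ Icc u v) :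
    deltaR G x y ≤ deltaR G u v := by
  wlog hxy : x ≤ y generalizing x y
  · rw [deltaR_comm]
    exact this hy hx (le_of_not_ge hxy)
  have huv : u ≤ v := hx.1.trans hx.2
  have hbdd := bddAbove_log_one_add_crossRatioR (fun h => hfr u h (left_mem_Icc.2 huv))
    (fun h => hfr v h (right_mem_Icc.2 huv))
  refine Real.sSup_le (forall_mem_image.2 fun ⟨a, b⟩ ⟨ha, hb⟩ => ?_) (deltaR_nonneg G u v)
  calc Real.log (1 + crossRatioR a x b y)
      ≤ Real.log (1 + crossRatioR a u b v) :=
        Real.log_le_log (by linarith [crossRatioR_nonneg a x b y])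
          (by linarith [crossRatioR_le_crossRatioR_of_mem_Icc (hfr a ha) (hfr b hb) hx hy hxy])
    _ ≤ deltaR G u v := le_csSup hbdd ⟨(a, b), ⟨ha, hb⟩, rfl⟩

theorem stmt14_general (G : Set ℝ) (hG : IsOpen G)
    (u v : ℝ) (huv : u ≤ v) (hsub : Set.Icc u v ⊆ G) :
    sSup ((fun p : ℝ × ℝ => deltaR G p.1 p.2) '' (Set.Icc u v ×ˢ Set.Icc u v))
      = deltaR G u v := by
  have hfr : ∀ a ∈ frontier G, a ∉ Icc u v := fun a ha hmem =>
    (hG.frontier_eq ▸ ha).2 (hsub hmem)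
  exact IsGreatest.csSup_eq
    ⟨⟨(u, v), ⟨left_mem_Icc.2 huv, right_mem_Icc.2 huv⟩, rfl⟩,
      forall_mem_image.2 fun _ ⟨hx, hy⟩ => deltaR_le_deltaR_of_mem_Icc hfr hx hy⟩

/-- For a segment `[u,v]` inside a domain `G ⊆ ℝ` whose complement has at least two
points, the `δ_G`-diameter of `[u,v]` is `δ_G(u,v)`. -/
theorem stmt14 (G : Set ℝ) (hG : IsOpen G) (hconn : IsConnected G)
    (hcard : Set.Nontrivial Gᶜ) (u v : ℝ) (huv : u ≤ v) (hsub : Set.Icc u v ⊆ G) :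
    sSup ((fun p : ℝ × ℝ => deltaR G p.1 p.2) '' (Set.Icc u v ×ˢ Set.Icc u v))
      = deltaR G u v :=
  stmt14_general G hG u v huv hsub
end

section
/- For a compact set $E$ contained in a domain $G\subset\overline{\mathbb{R}}^n$ with $\mathrm{card}(\overline{\mathbb{R}}^n\setminus G)\ge 2$, the $\delta_G$-diameter of $E$ equals the $\delta_G$-diameter of its boundary: $\sup_{x,y\in E}\delta_G(x,y) = \sup_{x,y\in\partial E}\delta_G(x,y)$. -/
/-!
Fix `a, b ∈ ∂G`, which lie outside `E` since `G` is open. As a function of `x`, the cross-ratio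
`|a,x,b,y|` is a constant times `q(y,x)/q(a,x)`, and as a function of `y` a constant times
`q(x,y)/q(b,y)`. After an inversion sending `a` to `∞`, `q(z,w)/q(a,w)` becomes a positive
multiple of the Euclidean distance from the image of `z` to that of `w`, which has no interior
maximum except the trivial one at `w = z`. By compactness of `E` its maximum over `E` is thus
attained on `∂E`, so moving first `x` and then `y` to `∂E` does not decrease the cross-ratio.
This gives `δ_G(E) ≤ δ_G(∂E)`; the other inequality is monotonicity, as `∂E ≠ ∅` by
connectedness of `ℝ̂ⁿ`. All suprema are finite because `∂G` and `E` are disjoint compact sets.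
-/

open Real Set OnePoint

/-- The chordal (spherical) metric on `ℝ̂ⁿ = ℝⁿ ∪ {∞}`. -/
noncomputable def chordal {n : ℕ} (x y : OnePoint (EuclideanSpace ℝ (Fin n))) : ℝ :=
  Option.elim x
    (Option.elim y 0 (fun b => 1 / Real.sqrt (1 + ‖b‖ ^ 2)))
    (fun a => Option.elim y (1 / Real.sqrt (1 + ‖a‖ ^ 2))
      (fun b => dist a b / (Real.sqrt (1 + ‖a‖ ^ 2) * Real.sqrt (1 + ‖b‖ ^ 2))))

/-- The cross-ratio `|a,x,b,y|` on `ℝ̂ⁿ`, defined via the chordal metric. -/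
noncomputable def qCross {n : ℕ} (a x b y : OnePoint (EuclideanSpace ℝ (Fin n))) : ℝ :=
  chordal a b * chordal x y / (chordal a x * chordal b y)

/-- The Möbius metric `δ_G` for `G ⊆ ℝ̂ⁿ`. -/
noncomputable def deltaHat {n : ℕ} (G : Set (OnePoint (EuclideanSpace ℝ (Fin n))))
    (x y : OnePoint (EuclideanSpace ℝ (Fin n))) : ℝ :=
  sSup ((fun p : OnePoint (EuclideanSpace ℝ (Fin n)) × OnePoint (EuclideanSpace ℝ (Fin n)) =>
    Real.log (1 + qCross p.1 x p.2 y)) '' (frontier G ×ˢ frontier G))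

/-- The `δ_G`-diameter of a set `E ⊆ G`: `δ_G(E) = sup_{x,y ∈ E} δ_G(x,y)`. -/
noncomputable def deltaDiam {n : ℕ} (G E : Set (OnePoint (EuclideanSpace ℝ (Fin n)))) : ℝ :=
  sSup ((fun p : OnePoint (EuclideanSpace ℝ (Fin n)) × OnePoint (EuclideanSpace ℝ (Fin n)) =>
    deltaHat G p.1 p.2) '' (E ×ˢ E))

open Filter Topology EuclideanGeometry

theorem OnePoint.nontrivial_of_nontrivial_compl {Y : Type*} {s : Set (OnePoint Y)}
    (hs : sᶜ.Nontrivial) (hne : s.Nonempty) : Nontrivial Y := by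
  obtain ⟨x, hx, y, hy, hxy⟩ := hs
  obtain ⟨e, he⟩ := hne
  have hex : e ≠ x := fun h => hx (h ▸ he)
  have hey : e ≠ y := fun h => hy (h ▸ he)
  by_contra hY
  rw [not_nontrivial_iff_subsingleton] at hY
  have hcoe {p q : OnePoint Y} (hp : p ≠ ∞) (hq : q ≠ ∞) : p = q := by
    obtain ⟨a, rfl⟩ := ne_infty_iff_exists.1 hp
    obtain ⟨b, rfl⟩ := ne_infty_iff_exists.1 hq
    rw [Subsingleton.elim a b]
  rcases eq_or_ne x ∞ with rfl | hx_ne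
  · exact hey (hcoe hex hxy.symm)
  rcases eq_or_ne y ∞ with rfl | hy_ne
  · exact hex (hcoe hey hx_ne)
  · exact hxy (hcoe hx_ne hy_ne)

/-- Pushing `q` away from `p` along the ray from `p` increases the distance. -/
theorem eq_of_isMaxOn_dist {E : Type*} [NormedAddCommGroup E] [NormedSpace ℝ E] {U : Set E}
    {p q : E} (hU : IsOpen U) (hq : q ∈ U) (hmax : IsMaxOn (dist p) U q) : q = p := by
  by_contra hqp
  have hray : Tendsto (fun t : ℝ => q + t • (q - p)) (𝓝[>] 0) (𝓝 q) := by
    have hcont : Continuous fun t : ℝ => q + t • (q - p) := by fun_prop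
    simpa using tendsto_nhdsWithin_of_tendsto_nhds (hcont.tendsto 0)
  obtain ⟨t, htU, ht : 0 < t⟩ :=
    ((hray.eventually (hU.mem_nhds hq)).and self_mem_nhdsWithin).exists
  have hdist : dist p (q + t • (q - p)) = (1 + t) * dist p q := by
    rw [dist_comm, dist_eq_norm, show q + t • (q - p) - p = (1 + t) • (q - p) by module,
      norm_smul, Real.norm_of_nonneg (by linarith), ← dist_eq_norm, dist_comm]
  have hle : dist p (q + t • (q - p)) ≤ dist p q := hmax htU
  rw [hdist] at hle
  nlinarith [dist_pos.2 (Ne.symm hqp)]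

theorem IsCompact.exists_mem_frontier_le_of_isMaxOn_interior {Y : Type*} [TopologicalSpace Y]
    {E : Set Y} {f : Y → ℝ} (hE : IsCompact E) (hf : ContinuousOn f E)
    (hint : ∀ w ∈ interior E, IsMaxOn f E w → ∃ w' ∈ frontier E, f w ≤ f w')
    {x : Y} (hx : x ∈ E) : ∃ w ∈ frontier E, f x ≤ f w := by
  obtain ⟨w, hwE, hmax⟩ := hE.exists_isMaxOn ⟨x, hx⟩ hf
  by_cases hw : w ∈ interior E
  · obtain ⟨w', hw', hle⟩ := hint w hw hmax
    exact ⟨w', hw', (hmax hx).trans hle⟩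
  · exact ⟨w, ⟨subset_closure hwE, hw⟩, hmax hx⟩

section CrossRatio

variable {n : ℕ}

local notation "V" => EuclideanSpace ℝ (Fin n)
local notation "X" => OnePoint (EuclideanSpace ℝ (Fin n))

@[simp] lemma chordal_infty_infty : chordal (n := n) ∞ ∞ = 0 := rfl
@[simp] lemma chordal_infty_coe (v : V) : chordal ∞ (v : X) = 1 / √(1 + ‖v‖ ^ 2) := rfl
@[simp] lemma chordal_coe_infty (v : V) : chordal (v : X) ∞ = 1 / √(1 + ‖v‖ ^ 2) := rfl
@[simp] lemma chordal_coe_coe (u v : V) :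
    chordal (u : X) (v : X) = dist u v / (√(1 + ‖u‖ ^ 2) * √(1 + ‖v‖ ^ 2)) := rfl

lemma chordal_nonneg (x y : X) : 0 ≤ chordal x y := by
  induction x using OnePoint.rec <;> induction y using OnePoint.rec <;>
    simp only [chordal_infty_infty, chordal_infty_coe, chordal_coe_infty, chordal_coe_coe] <;>
    positivity

lemma chordal_pos {x y : X} (h : x ≠ y) : 0 < chordal x y := by
  induction x using OnePoint.rec <;> induction y using OnePoint.rec
  case infty.infty => exact absurd rfl h
  case coe.coe u v =>
    have : u ≠ v := fun huv => h (congrArg _ huv)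
    exact div_pos (dist_pos.2 this) (by positivity)
  all_goals simp only [chordal_infty_coe, chordal_coe_infty]; positivity

lemma chordal_comm (x y : X) : chordal x y = chordal y x := by
  induction x using OnePoint.rec <;> induction y using OnePoint.rec <;>
    simp [dist_comm, mul_comm]

lemma chordal_le_one (x y : X) : chordal x y ≤ 1 := by
  have one_le (v : V) : 1 ≤ √(1 + ‖v‖ ^ 2) :=
    Real.one_le_sqrt.2 (le_add_of_nonneg_right (by positivity))
  induction x using OnePoint.rec <;> induction y using OnePoint.rec
  case infty.infty => simp
  case infty.coe v | coe.infty v => simpa using (inv_le_one₀ (by positivity)).2 (one_le v)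
  case coe.coe u v =>
    rw [chordal_coe_coe, div_le_one (by positivity), ← Real.sqrt_mul (by positivity)]
    calc dist u v ≤ ‖u‖ + ‖v‖ := dist_le_norm_add_norm u v
      _ = √((‖u‖ + ‖v‖) ^ 2) := (Real.sqrt_sq (by positivity)).symm
      _ ≤ _ := Real.sqrt_le_sqrt (by nlinarith [sq_nonneg (‖u‖ * ‖v‖ - 1)])

@[simp] lemma chordal_eq_zero_iff {x y : X} : chordal x y = 0 ↔ x = y := by
  refine ⟨fun h => ?_, ?_⟩
  · by_contra hxy
    exact (chordal_pos hxy).ne' h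
  · rintro rfl
    induction x using OnePoint.rec <;> simp

/-- The chordal metric is the Euclidean distance between the images under this embedding of
`ℝ̂ⁿ` onto the sphere of diameter one in `ℝⁿ × ℝ` tangent to `ℝⁿ × {0}` at the origin. -/
noncomputable def sphereEmbedding (x : X) : WithLp 2 (V × ℝ) :=
  x.elim (WithLp.toLp 2 (0, 0)) fun v => WithLp.toLp 2 ((1 + ‖v‖ ^ 2)⁻¹ • v, (1 + ‖v‖ ^ 2)⁻¹)

lemma chordal_eq_dist_sphereEmbedding (x y : X) :
    chordal x y = dist (sphereEmbedding x) (sphereEmbedding y) := by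
  refine (sq_eq_sq₀ (chordal_nonneg x y) dist_nonneg).1 ?_
  rw [WithLp.prod_dist_eq_of_L2, Real.sq_sqrt (by positivity)]
  induction x using OnePoint.rec <;> induction y using OnePoint.rec <;>
    simp only [sphereEmbedding, OnePoint.elim_infty, OnePoint.elim_some, dist_eq_norm,
      WithLp.toLp_fst, WithLp.toLp_snd,
      chordal_infty_infty, chordal_infty_coe, chordal_coe_infty, chordal_coe_coe]
  case infty.infty => simp
  case infty.coe v | coe.infty v =>
    have hv : 0 < 1 + ‖v‖ ^ 2 := by positivity
    simp only [zero_sub, sub_zero, norm_neg, norm_smul, Real.norm_eq_abs, div_pow, one_pow,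
      Real.sq_sqrt hv.le, abs_inv, abs_of_pos hv]
    field_simp
    ring
  case coe.coe u v =>
    have hu : 0 < 1 + ‖u‖ ^ 2 := by positivity
    have hv : 0 < 1 + ‖v‖ ^ 2 := by positivity
    rw [div_pow, mul_pow, Real.sq_sqrt hu.le, Real.sq_sqrt hv.le, norm_sub_sq_real,
      norm_sub_sq_real, real_inner_smul_left, real_inner_smul_right, norm_smul, norm_smul]
    simp only [Real.norm_eq_abs, abs_inv, abs_of_pos hu, abs_of_pos hv, sq_abs]
    field_simp
    ring

lemma continuous_sphereEmbedding : Continuous (sphereEmbedding (n := n)) := by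
  have hinv : Continuous fun v : V => (1 + ‖v‖ ^ 2)⁻¹ :=
    (by fun_prop : Continuous fun v : V => 1 + ‖v‖ ^ 2).inv₀ fun v => by positivity
  refine (OnePoint.continuous_iff _).2 ⟨?_, ?_⟩
  · rw [tendsto_iff_dist_tendsto_zero, coclosedCompact_eq_cocompact]
    simp_rw [← chordal_eq_dist_sphereEmbedding, chordal_coe_infty, one_div]
    exact tendsto_inv_atTop_zero.comp <| Real.tendsto_sqrt_atTop.comp <|
      tendsto_atTop_add_const_left _ 1 <|
        (tendsto_pow_atTop two_ne_zero).comp tendsto_norm_cocompact_atTop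
  · exact (WithLp.prod_continuous_toLp 2 V ℝ).comp ((hinv.smul continuous_id).prodMk hinv)

lemma continuous_chordal : Continuous fun p : X × X => chordal p.1 p.2 := by
  simp_rw [chordal_eq_dist_sphereEmbedding]
  exact (continuous_sphereEmbedding.comp continuous_fst).dist
    (continuous_sphereEmbedding.comp continuous_snd)

/-- Coordinates on `ℝ̂ⁿ ∖ {a}` that send `a` to infinity: the identity if `a = ∞`, and the
inversion in the unit sphere centred at `a` otherwise. -/
noncomputable def chartAway (a w : X) : V :=
  a.elim (w.elim 0 id) fun α => w.elim α (inversion α 1)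

noncomputable def chartAwayInv (a : X) (q : V) : X :=
  a.elim (q : X) fun α => if q = α then ∞ else ((inversion α 1 q : V) : X)

lemma chartAway_chartAwayInv (a : X) (q : V) : chartAway a (chartAwayInv a q) = q := by
  induction a using OnePoint.rec
  case infty => rfl
  case coe α =>
    by_cases hq : q = α
    · simp [chartAway, chartAwayInv, hq]
    · simp [chartAway, chartAwayInv, hq, inversion_inversion α one_ne_zero]

lemma chartAwayInv_chartAway {a w : X} (h : w ≠ a) : chartAwayInv a (chartAway a w) = w := by
  induction a using OnePoint.rec <;> induction w using OnePoint.rec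
  case infty.infty => exact absurd rfl h
  case infty.coe v => rfl
  case coe.infty α => simp [chartAway, chartAwayInv]
  case coe.coe α v =>
    have hv : v ≠ α := fun hv => h (congrArg _ hv)
    simp [chartAway, chartAwayInv, inversion_eq_center one_ne_zero, hv,
      inversion_inversion α one_ne_zero]

lemma continuous_chartAwayInv (a : X) : Continuous (chartAwayInv a) := by
  induction a using OnePoint.rec
  case infty => exact OnePoint.continuous_coe
  case coe α =>
    refine continuous_iff_continuousAt.2 fun q => ?_
    rcases eq_or_ne q α with rfl | hq
    · have hinv : Tendsto (fun p : V => ((inversion q 1 p : V) : X)) (𝓝[≠] q) (𝓝 ∞) := by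
        refine OnePoint.tendsto_coe_infty.comp ?_
        rw [coclosedCompact_eq_cocompact, ← Metric.cobounded_eq_cocompact]
        exact tendsto_inversion_nhdsNE_center_cobounded one_ne_zero
      have hpole : chartAwayInv (q : X) q = ∞ := by simp [chartAwayInv]
      rw [ContinuousAt, hpole, ← nhdsNE_sup_pure, tendsto_sup]
      refine ⟨hinv.congr' ?_, ?_⟩
      · filter_upwards [self_mem_nhdsWithin] with p hp
        simp only [chartAwayInv, OnePoint.elim_some, if_neg (show p ≠ q from hp)]
      · exact hpole ▸ tendsto_pure_nhds _ q
    · have hinv : ContinuousAt (inversion α 1) q :=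
        continuousAt_const.inversion continuousAt_const continuousAt_id hq
      have hcont : ContinuousAt (fun p : V => ((inversion α 1 p : V) : X)) q :=
        OnePoint.continuous_coe.continuousAt.comp hinv
      refine hcont.congr ?_
      filter_upwards [isOpen_ne.mem_nhds hq] with p hp
      simp [chartAwayInv, hp]

lemma exists_chordal_div_eq_mul_dist_chartAway {a z : X} (hza : z ≠ a) :
    ∃ C > 0, ∀ w ≠ a, chordal z w / chordal a w = C * dist (chartAway a z) (chartAway a w) := by
  have hS (v : V) : 0 < √(1 + ‖v‖ ^ 2) := by positivity
  induction a using OnePoint.rec <;> induction z using OnePoint.rec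
  case infty.infty => exact absurd rfl hza
  case infty.coe u =>
    refine ⟨1 / √(1 + ‖u‖ ^ 2), by positivity, fun w hw => ?_⟩
    induction w using OnePoint.rec
    case infty => exact absurd rfl hw
    case coe v =>
      simp only [chordal_coe_coe, chordal_infty_coe, chartAway, OnePoint.elim_infty,
        OnePoint.elim_some, id]
      field_simp [(hS v).ne']
  case coe.infty α =>
    refine ⟨√(1 + ‖α‖ ^ 2), hS α, fun w hw => ?_⟩
    induction w using OnePoint.rec
    case infty => simp [chartAway]
    case coe v =>
      have hv : v ≠ α := fun h => hw (congrArg _ h)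
      simp only [chordal_coe_coe, chordal_infty_coe, chartAway, OnePoint.elim_infty,
        OnePoint.elim_some, dist_center_inversion, dist_comm α v]
      field_simp [dist_ne_zero.2 hv, (hS v).ne']
  case coe.coe α u =>
    have hu : u ≠ α := fun h => hza (congrArg _ h)
    have hdu : 0 < dist u α := dist_pos.2 hu
    refine ⟨√(1 + ‖α‖ ^ 2) * dist u α / √(1 + ‖u‖ ^ 2), by positivity, fun w hw => ?_⟩
    induction w using OnePoint.rec
    case infty =>
      simp only [chordal_coe_infty, chartAway, OnePoint.elim_infty, OnePoint.elim_some,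
        dist_inversion_center]
      field_simp [hdu.ne']
    case coe v =>
      have hv : v ≠ α := fun h => hw (congrArg _ h)
      simp only [chordal_coe_coe, chartAway, OnePoint.elim_some,
        dist_inversion_inversion hu hv, dist_comm α v]
      field_simp [dist_ne_zero.2 hv, hdu.ne']

/-- In the chart sending `a` to infinity, `chordal z · / chordal a ·` is a positive multiple of
the distance to the image of `z`, which has no interior maximum except at `z` itself. -/
lemma eq_of_isMaxOn_chordal_div {E : Set X} {a z w₀ : X} (ha : a ∉ E) (hza : z ≠ a)
    (hw₀ : w₀ ∈ interior E) (hmax : IsMaxOn (fun w => chordal z w / chordal a w) E w₀) :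
    w₀ = z := by
  obtain ⟨C, hC, hratio⟩ := exists_chordal_div_eq_mul_dist_chartAway hza
  have hne : ∀ w ∈ E, w ≠ a := fun w hw h => ha (h ▸ hw)
  have hw₀E : w₀ ∈ E := interior_subset hw₀
  have hU : IsOpen (chartAwayInv a ⁻¹' interior E) :=
    isOpen_interior.preimage (continuous_chartAwayInv a)
  have hmax' : IsMaxOn (dist (chartAway a z)) (chartAwayInv a ⁻¹' interior E)
      (chartAway a w₀) := by
    intro q hq
    have hqE : chartAwayInv a q ∈ E := interior_subset hq
    have hle : chordal z (chartAwayInv a q) / chordal a (chartAwayInv a q) ≤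
        chordal z w₀ / chordal a w₀ := hmax hqE
    rw [hratio _ (hne _ hqE), hratio _ (hne _ hw₀E), chartAway_chartAwayInv] at hle
    exact le_of_mul_le_mul_left hle hC
  have hcenter := eq_of_isMaxOn_dist hU
    (by rwa [Set.mem_preimage, chartAwayInv_chartAway (hne _ hw₀E)]) hmax'
  have hzero : chordal z w₀ / chordal a w₀ = 0 := by
    rw [hratio _ (hne _ hw₀E), hcenter, dist_self, mul_zero]
  rw [div_eq_zero_iff, or_iff_left (chordal_pos (hne _ hw₀E).symm).ne'] at hzero
  exact (chordal_eq_zero_iff.1 hzero).symm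

lemma exists_mem_frontier_chordal_div_le {E : Set X} (hE : IsCompact E)
    (hfr : (frontier E).Nonempty) {a : X} (ha : a ∉ E) (z : X) {x : X} (hx : x ∈ E) :
    ∃ w ∈ frontier E, chordal z x / chordal a x ≤ chordal z w / chordal a w := by
  have hne : ∀ w ∈ E, a ≠ w := fun w hw h => ha (h ▸ hw)
  obtain ⟨w', hw'⟩ := hfr
  have hw'E : w' ∈ E := hE.isClosed.frontier_subset hw'
  by_cases hza : z = a
  · refine ⟨w', hw', ?_⟩
    rw [hza, div_self (chordal_pos (hne x hx)).ne', div_self (chordal_pos (hne w' hw'E)).ne']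
  have hcont : Continuous fun w => chordal z w :=
    continuous_chordal.comp (continuous_const.prodMk continuous_id)
  have hcont' : Continuous fun w => chordal a w :=
    continuous_chordal.comp (continuous_const.prodMk continuous_id)
  refine hE.exists_mem_frontier_le_of_isMaxOn_interior (f := fun w => chordal z w / chordal a w)
    (hcont.continuousOn.div hcont'.continuousOn fun w hw => (chordal_pos (hne w hw)).ne')
    (fun w hw hmax => ⟨w', hw', ?_⟩) hx
  rw [eq_of_isMaxOn_chordal_div ha hza hw hmax, chordal_eq_zero_iff.2 rfl, zero_div]
  exact div_nonneg (chordal_nonneg _ _) (chordal_nonneg _ _)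

lemma qCross_nonneg (a x b y : X) : 0 ≤ qCross a x b y := by
  unfold qCross
  exact div_nonneg (mul_nonneg (chordal_nonneg _ _) (chordal_nonneg _ _))
    (mul_nonneg (chordal_nonneg _ _) (chordal_nonneg _ _))

lemma exists_mem_frontier_qCross_le {E : Set X} (hE : IsCompact E) (hfr : (frontier E).Nonempty)
    {a b : X} (ha : a ∉ E) (hb : b ∉ E) {x y : X} (hx : x ∈ E) (hy : y ∈ E) :
    ∃ x' ∈ frontier E, ∃ y' ∈ frontier E, qCross a x b y ≤ qCross a x' b y' := by
  obtain ⟨x', hx', hxx'⟩ := exists_mem_frontier_chordal_div_le hE hfr ha y hx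
  obtain ⟨y', hy', hyy'⟩ := exists_mem_frontier_chordal_div_le hE hfr hb x' hy
  refine ⟨x', hx', y', hy', ?_⟩
  have hvary_fst (u : X) :
      qCross a u b y = chordal a b / chordal b y * (chordal y u / chordal a u) := by
    rw [qCross, chordal_comm u y, mul_comm (chordal a u), mul_div_mul_comm]
  have hvary_snd (u : X) :
      qCross a x' b u = chordal a b / chordal a x' * (chordal x' u / chordal b u) :=
    mul_div_mul_comm _ _ _ _
  have hcoeff (p q r s : X) : 0 ≤ chordal p q / chordal r s :=
    div_nonneg (chordal_nonneg _ _) (chordal_nonneg _ _)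
  calc qCross a x b y
      ≤ qCross a x' b y := by
        rw [hvary_fst, hvary_fst]; exact mul_le_mul_of_nonneg_left hxx' (hcoeff _ _ _ _)
    _ ≤ qCross a x' b y' := by
        rw [hvary_snd, hvary_snd]; exact mul_le_mul_of_nonneg_left hyy' (hcoeff _ _ _ _)

lemma exists_qCross_le {A E : Set X} (hA : IsCompact A) (hE : IsCompact E) (hAE : Disjoint A E) :
    ∃ M, 0 ≤ M ∧ ∀ a ∈ A, ∀ b ∈ A, ∀ x ∈ E, ∀ y ∈ E, qCross a x b y ≤ M := by
  have hpos : ∀ p ∈ A ×ˢ E, 0 < chordal p.1 p.2 := fun p hp =>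
    chordal_pos fun h => Set.disjoint_left.1 hAE hp.1 (by rw [h]; exact hp.2)
  obtain ⟨B, hB⟩ := (hA.prod hE).bddAbove_image (f := fun p => (chordal p.1 p.2)⁻¹)
    (continuous_chordal.continuousOn.inv₀ fun p hp => (hpos p hp).ne')
  have hinv_le {a x : X} (ha : a ∈ A) (hx : x ∈ E) : (chordal a x)⁻¹ ≤ max B 0 :=
    (hB ⟨(a, x), ⟨ha, hx⟩, rfl⟩).trans (le_max_left _ _)
  refine ⟨max B 0 * max B 0, by positivity, fun a ha b hb x hx y hy => ?_⟩
  calc qCross a x b y = chordal a b * chordal x y * ((chordal a x)⁻¹ * (chordal b y)⁻¹) := by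
        rw [qCross, div_eq_mul_inv, mul_inv]
    _ ≤ 1 * (max B 0 * max B 0) := by
        gcongr
        · exact mul_nonneg (inv_nonneg.2 (chordal_nonneg _ _)) (inv_nonneg.2 (chordal_nonneg _ _))
        · exact mul_le_one₀ (chordal_le_one _ _) (chordal_nonneg _ _) (chordal_le_one _ _)
        · exact inv_nonneg.2 (chordal_nonneg _ _)
        · exact hinv_le ha hx
        · exact hinv_le hb hy
    _ = max B 0 * max B 0 := one_mul _

lemma deltaHat_nonneg (G : Set X) (x y : X) : 0 ≤ deltaHat G x y :=
  Real.sSup_nonneg <| by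
    rintro _ ⟨⟨a, b⟩, -, rfl⟩
    exact Real.log_nonneg (le_add_of_nonneg_right (qCross_nonneg _ _ _ _))

lemma deltaHat_le {G : Set X} {x y : X} {c : ℝ} (hc : 0 ≤ c)
    (h : ∀ a ∈ frontier G, ∀ b ∈ frontier G, log (1 + qCross a x b y) ≤ c) :
    deltaHat G x y ≤ c :=
  Real.sSup_le (by rintro _ ⟨⟨a, b⟩, ⟨ha, hb⟩, rfl⟩; exact h a ha b hb) hc

lemma le_deltaHat {G : Set X} {x y a b : X} {c : ℝ}
    (h : ∀ a ∈ frontier G, ∀ b ∈ frontier G, log (1 + qCross a x b y) ≤ c)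
    (ha : a ∈ frontier G) (hb : b ∈ frontier G) : log (1 + qCross a x b y) ≤ deltaHat G x y :=
  le_csSup ⟨c, by rintro _ ⟨⟨a, b⟩, ⟨ha, hb⟩, rfl⟩; exact h a ha b hb⟩ ⟨(a, b), ⟨ha, hb⟩, rfl⟩

lemma deltaDiam_nonneg (G E : Set X) : 0 ≤ deltaDiam G E :=
  Real.sSup_nonneg <| by
    rintro _ ⟨⟨x, y⟩, -, rfl⟩
    exact deltaHat_nonneg _ _ _

lemma deltaDiam_le {G E : Set X} {c : ℝ} (hc : 0 ≤ c)
    (h : ∀ x ∈ E, ∀ y ∈ E, deltaHat G x y ≤ c) : deltaDiam G E ≤ c :=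
  Real.sSup_le (by rintro _ ⟨⟨x, y⟩, ⟨hx, hy⟩, rfl⟩; exact h x hx y hy) hc

lemma le_deltaDiam {G E : Set X} {x y : X} {c : ℝ} (h : ∀ x ∈ E, ∀ y ∈ E, deltaHat G x y ≤ c)
    (hx : x ∈ E) (hy : y ∈ E) : deltaHat G x y ≤ deltaDiam G E :=
  le_csSup ⟨c, by rintro _ ⟨⟨x, y⟩, ⟨hx, hy⟩, rfl⟩; exact h x hx y hy⟩ ⟨(x, y), ⟨hx, hy⟩, rfl⟩

lemma deltaDiam_mono {G E F : Set X} {c : ℝ} (h : ∀ x ∈ E, ∀ y ∈ E, deltaHat G x y ≤ c)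
    (hF : F.Nonempty) (hFE : F ⊆ E) : deltaDiam G F ≤ deltaDiam G E :=
  csSup_le_csSup ⟨c, by rintro _ ⟨⟨x, y⟩, ⟨hx, hy⟩, rfl⟩; exact h x hx y hy⟩
    ((hF.prod hF).image _) (image_mono (prod_mono hFE hFE))

end CrossRatio

theorem stmt15_general (n : ℕ) (G E : Set (OnePoint (EuclideanSpace ℝ (Fin n))))
    (hG : IsOpen G) (hcard : Set.Nontrivial Gᶜ)
    (hE : IsCompact E) (hEG : E ⊆ G) :
    deltaDiam G E = deltaDiam G (frontier E) := by
  rcases E.eq_empty_or_nonempty with rfl | hne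
  · rw [frontier_empty]
  have : Nontrivial (EuclideanSpace ℝ (Fin n)) :=
    OnePoint.nontrivial_of_nontrivial_compl hcard (hne.mono hEG)
  have hfr : (frontier E).Nonempty := by
    refine nonempty_frontier_iff.2 ⟨hne, fun hEuniv => ?_⟩
    obtain ⟨p, hp⟩ := hcard.nonempty
    exact hp (hEG (hEuniv ▸ mem_univ p))
  have hfrE : frontier E ⊆ E := hE.isClosed.frontier_subset
  have hGE : ∀ a ∈ frontier G, a ∉ E := fun a ha haE => (hG.frontier_eq ▸ ha).2 (hEG haE)
  obtain ⟨M, hM0, hM⟩ := exists_qCross_le isClosed_frontier.isCompact hE (disjoint_left.2 hGE)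
  have hlogM : ∀ x ∈ E, ∀ y ∈ E, ∀ a ∈ frontier G, ∀ b ∈ frontier G,
      log (1 + qCross a x b y) ≤ log (1 + M) := fun x hx y hy a ha b hb =>
    log_le_log (by linarith [qCross_nonneg a x b y]) (by linarith [hM a ha b hb x hx y hy])
  have hbound : ∀ x ∈ E, ∀ y ∈ E, deltaHat G x y ≤ log (1 + M) := fun x hx y hy =>
    deltaHat_le (log_nonneg (by linarith)) (hlogM x hx y hy)
  refine le_antisymm (deltaDiam_le (deltaDiam_nonneg _ _) fun x hx y hy =>
    deltaHat_le (deltaDiam_nonneg _ _) fun a ha b hb => ?_) (deltaDiam_mono hbound hfr hfrE)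
  obtain ⟨x', hx', y', hy', hq⟩ :=
    exists_mem_frontier_qCross_le hE hfr (hGE a ha) (hGE b hb) hx hy
  calc log (1 + qCross a x b y) ≤ log (1 + qCross a x' b y') :=
        log_le_log (by linarith [qCross_nonneg a x b y]) (by linarith)
    _ ≤ deltaHat G x' y' := le_deltaHat (hlogM x' (hfrE hx') y' (hfrE hy')) ha hb
    _ ≤ deltaDiam G (frontier E) :=
        le_deltaDiam (fun u hu w hw => hbound u (hfrE hu) w (hfrE hw)) hx' hy'

/-- For a compact set `E` in a domain `G ⊆ ℝ̂ⁿ` whose complement has at least two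
points, the `δ_G`-diameter of `E` equals the `δ_G`-diameter of `∂E`. -/
theorem stmt15 (n : ℕ) (G E : Set (OnePoint (EuclideanSpace ℝ (Fin n))))
    (hG : IsOpen G) (hconn : IsConnected G) (hcard : Set.Nontrivial Gᶜ)
    (hE : IsCompact E) (hEG : E ⊆ G) :
    deltaDiam G E = deltaDiam G (frontier E) :=
  stmt15_general n G E hG hcard hE hEG
end

section
/- For the sets $E=[-1,0]$ and $F=[s,\infty]$ (with $s>0$, including $\infty$) viewed as subsets of $\overline{\mathbb{R}}^n$ lying on the real axis, the quantity $\delta(E,F)=\delta_{\overline{\mathbb{R}}^n\setminus F}(E)$ equals $\log(1+1/s)$. -/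
open Real Set OnePoint

/-!
On the real axis the chordal cross-ratio equals the Euclidean one,
`|α - β| |ξ - η| / (|α - ξ| |β - η|)`, because the conformal factors of the chordal metric cancel.
For `a, b` in the closed ray `[s, ∞]` (which contains the boundary of its complement) and
`x, y ∈ [-1, 0]` it is at most `1 / s`, and this value is attained at `x = 0`, `y = -1`, `a = s`,
`b = ∞`, where `s` and `∞` both lie on that boundary.
-/

namespace MobiusMetric

variable {n : ℕ}

local notation "ℝ̂" n => OnePoint (EuclideanSpace ℝ (Fin n))

section CrossRatio

lemma chordal_nonneg (x y : ℝ̂ n) : 0 ≤ chordal x y := by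
  cases x <;> cases y <;> simp only [chordal, Option.elim] <;> positivity

lemma qCross_nonneg (a x b y : ℝ̂ n) : 0 ≤ qCross a x b y :=
  div_nonneg (mul_nonneg (chordal_nonneg _ _) (chordal_nonneg _ _))
    (mul_nonneg (chordal_nonneg _ _) (chordal_nonneg _ _))

lemma qCross_infty_infty (x y : ℝ̂ n) : qCross ∞ x ∞ y = 0 := by
  rw [qCross, show chordal (∞ : ℝ̂ n) ∞ = 0 from rfl, zero_mul, zero_div]

variable (a b x y : EuclideanSpace ℝ (Fin n))

lemma qCross_coe :
    qCross (a : ℝ̂ n) x b y = dist a b * dist x y / (dist a x * dist b y) := by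
  simp only [qCross, chordal, Option.elim]
  rcases eq_or_ne (dist a x) 0 with hax | hax
  · simp [hax]
  rcases eq_or_ne (dist b y) 0 with hby | hby
  · simp [hby]
  field_simp

lemma qCross_infty_coe : qCross ∞ (x : ℝ̂ n) b y = dist x y / dist b y := by
  simp only [qCross, chordal, Option.elim]
  rcases eq_or_ne (dist b y) 0 with hby | hby
  · simp [hby]
  field_simp

lemma qCross_coe_infty : qCross (a : ℝ̂ n) x ∞ y = dist x y / dist a x := by
  simp only [qCross, chordal, Option.elim]
  rcases eq_or_ne (dist a x) 0 with hax | hax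
  · simp [hax]
  field_simp

end CrossRatio

section MobiusDiameter

variable {G E : Set (ℝ̂ n)} {x y a b : ℝ̂ n} {C : ℝ}

lemma deltaHat_le_log (hC : 0 ≤ C)
    (h : ∀ a ∈ frontier G, ∀ b ∈ frontier G, qCross a x b y ≤ C) :
    deltaHat G x y ≤ log (1 + C) := by
  refine Real.sSup_le ?_ (log_nonneg (by linarith))
  rintro _ ⟨⟨a, b⟩, ⟨ha, hb⟩, rfl⟩
  exact log_le_log (by linarith [qCross_nonneg a x b y]) (by linarith [h a ha b hb])

lemma log_le_deltaHat (h : ∀ a ∈ frontier G, ∀ b ∈ frontier G, qCross a x b y ≤ C)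
    (ha : a ∈ frontier G) (hb : b ∈ frontier G) :
    log (1 + qCross a x b y) ≤ deltaHat G x y := by
  refine le_csSup ⟨log (1 + C), ?_⟩ (mem_image_of_mem _ (mk_mem_prod ha hb))
  rintro _ ⟨⟨a, b⟩, ⟨ha, hb⟩, rfl⟩
  exact log_le_log (by linarith [qCross_nonneg a x b y]) (by linarith [h a ha b hb])

lemma deltaDiam_eq_log
    (h : ∀ x ∈ E, ∀ y ∈ E, ∀ a ∈ frontier G, ∀ b ∈ frontier G, qCross a x b y ≤ C)
    (hx : x ∈ E) (hy : y ∈ E) (ha : a ∈ frontier G) (hb : b ∈ frontier G)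
    (hC : qCross a x b y = C) :
    deltaDiam G E = log (1 + C) := by
  have hC₀ : 0 ≤ C := hC ▸ qCross_nonneg a x b y
  have hE : ∀ p ∈ E ×ˢ E, deltaHat G p.1 p.2 ≤ log (1 + C) := fun p hp =>
    deltaHat_le_log hC₀ (h p.1 hp.1 p.2 hp.2)
  refine le_antisymm (Real.sSup_le ?_ (log_nonneg (by linarith))) ?_
  · rintro _ ⟨p, hp, rfl⟩
    exact hE p hp
  calc log (1 + C) = log (1 + qCross a x b y) := by rw [hC]
    _ ≤ deltaHat G x y := log_le_deltaHat (h x hx y hy) ha hb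
    _ ≤ deltaDiam G E :=
      le_csSup ⟨log (1 + C), by rintro _ ⟨p, hp, rfl⟩; exact hE p hp⟩
        (mem_image_of_mem _ (mk_mem_prod hx hy))

end MobiusDiameter

section RealAxis

open Filter Topology

noncomputable def realAxis (i : Fin n) (t : ℝ) : ℝ̂ n :=
  (EuclideanSpace.single i t : EuclideanSpace ℝ (Fin n))

noncomputable def axisRay (i : Fin n) (s : ℝ) : Set (ℝ̂ n) := realAxis i '' Ici s ∪ {∞}

variable (i : Fin n)

lemma isometry_single : Isometry (EuclideanSpace.single i : ℝ → EuclideanSpace ℝ (Fin n)) :=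
  Isometry.of_dist_eq fun a b => PiLp.dist_single_same 2 (fun _ => ℝ) i a b

lemma dist_single (α β : ℝ) :
    dist (EuclideanSpace.single i α : EuclideanSpace ℝ (Fin n)) (EuclideanSpace.single i β) =
      |α - β| :=
  ((isometry_single i).dist_eq α β).trans (Real.dist_eq α β)

lemma continuous_realAxis : Continuous (realAxis i) :=
  OnePoint.continuous_coe.comp (isometry_single i).continuous

lemma tendsto_realAxis_atBot : Tendsto (realAxis i) atBot (𝓝 ∞) := by
  refine OnePoint.tendsto_coe_infty.comp ?_
  rw [coclosedCompact_eq_cocompact]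
  exact (isometry_single i).isClosedEmbedding.tendsto_cocompact.mono_left atBot_le_cocompact

lemma preimage_realAxis_axisRay (s : ℝ) : realAxis i ⁻¹' axisRay i s = Ici s := by
  ext t
  simp [axisRay, realAxis, (isometry_single i).injective.eq_iff]

lemma isClosed_axisRay (s : ℝ) : IsClosed (axisRay i s) := by
  rw [OnePoint.isClosed_iff_of_mem (Or.inr rfl)]
  have hpre : ((↑) : EuclideanSpace ℝ (Fin n) → ℝ̂ n) ⁻¹' axisRay i s =
      EuclideanSpace.single i '' Ici s := by
    ext v
    simp [axisRay, realAxis]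
  rw [hpre]
  exact (isometry_single i).isClosedEmbedding.isClosedMap _ isClosed_Ici

lemma mapsTo_realAxis_Iio_compl_axisRay (s : ℝ) : MapsTo (realAxis i) (Iio s) (axisRay i s)ᶜ :=
  fun t ht hmem => (not_le.2 ht : ¬ s ≤ t) <| by
    rwa [← mem_preimage, preimage_realAxis_axisRay] at hmem

lemma realAxis_mem_frontier_axisRay (s : ℝ) : realAxis i s ∈ frontier (axisRay i s) := by
  rw [frontier_eq_closure_inter_closure]
  refine ⟨subset_closure (Or.inl ⟨s, self_mem_Ici, rfl⟩), ?_⟩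
  refine map_mem_closure (continuous_realAxis i) ?_ (mapsTo_realAxis_Iio_compl_axisRay i s)
  rw [closure_Iio]
  exact self_mem_Iic

lemma infty_mem_frontier_axisRay (s : ℝ) : ∞ ∈ frontier (axisRay i s) := by
  rw [frontier_eq_closure_inter_closure]
  refine ⟨subset_closure (Or.inr rfl), mem_closure_of_tendsto (tendsto_realAxis_atBot i) ?_⟩
  filter_upwards [Iio_mem_atBot s] with t ht
  exact mapsTo_realAxis_Iio_compl_axisRay i s ht

end RealAxis

section Estimates

variable {s α β ξ η : ℝ}

-- `|α - β| ≤ max α β` while `|α - ξ| |β - η| ≥ α β ≥ s max α β`.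
lemma abs_sub_mul_abs_sub_div_le (hs : 0 < s) (hα : s ≤ α) (hβ : s ≤ β)
    (hξ : ξ ∈ Icc (-1) 0) (hη : η ∈ Icc (-1) 0) :
    |α - β| * |ξ - η| / (|α - ξ| * |β - η|) ≤ 1 / s := by
  obtain ⟨hξ₁, hξ₂⟩ := hξ
  obtain ⟨hη₁, hη₂⟩ := hη
  have hαξ : 0 < α - ξ := by linarith
  have hβη : 0 < β - η := by linarith
  have hξη : |ξ - η| ≤ 1 := abs_sub_le_iff.2 ⟨by linarith, by linarith⟩
  have hαβ : |α - β| * s ≤ α * β := by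
    rcases le_total β α with h | h
    · rw [abs_of_nonneg (sub_nonneg.2 h)]; nlinarith
    · rw [abs_of_nonpos (sub_nonpos.2 h)]; nlinarith
  rw [abs_of_pos hαξ, abs_of_pos hβη, div_le_div_iff₀ (mul_pos hαξ hβη) hs, one_mul]
  calc |α - β| * |ξ - η| * s = |α - β| * s * |ξ - η| := by ring
    _ ≤ |α - β| * s := mul_le_of_le_one_right (by positivity) hξη
    _ ≤ α * β := hαβ
    _ ≤ (α - ξ) * (β - η) := mul_le_mul (by linarith) (by linarith) (by linarith) (by linarith)

lemma abs_sub_div_abs_sub_le (hs : 0 < s) (hβ : s ≤ β) (hξ : ξ ∈ Icc (-1) 0)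
    (hη : η ∈ Icc (-1) 0) : |ξ - η| / |β - η| ≤ 1 / s :=
  div_le_div₀ zero_le_one (abs_sub_le_iff.2 ⟨by linarith [hξ.2, hη.1], by linarith [hξ.1, hη.2]⟩)
    hs (le_abs.2 (Or.inl (by linarith [hη.2])))

end Estimates

lemma qCross_le_of_mem_axisRay {i : Fin n} {s ξ η : ℝ} (hs : 0 < s) {a b : ℝ̂ n}
    (ha : a ∈ axisRay i s) (hb : b ∈ axisRay i s) (hξ : ξ ∈ Icc (-1) 0) (hη : η ∈ Icc (-1) 0) :
    qCross a (realAxis i ξ) b (realAxis i η) ≤ 1 / s := by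
  rcases ha with ⟨α, hα, rfl⟩ | rfl <;> rcases hb with ⟨β, hβ, rfl⟩ | rfl
  · simp only [realAxis, qCross_coe, dist_single]
    exact abs_sub_mul_abs_sub_div_le hs hα hβ hξ hη
  · simp only [realAxis, qCross_coe_infty, dist_single]
    rw [abs_sub_comm ξ η]
    exact abs_sub_div_abs_sub_le hs hα hη hξ
  · simp only [realAxis, qCross_infty_coe, dist_single]
    exact abs_sub_div_abs_sub_le hs hβ hξ hη
  · rw [qCross_infty_infty]
    positivity

end MobiusMetric

open MobiusMetric

/-- For `E = [-1,0]` and `F = [s,∞]` (with `s > 0`) on the real axis of `ℝ̂ⁿ`,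
`δ(E,F) = δ_{ℝ̂ⁿ∖F}(E) = log(1 + 1/s)`. -/
theorem stmt17 (n : ℕ) (hn : 0 < n) (s : ℝ) (hs : 0 < s) :
    deltaDiam
      (((fun t : ℝ =>
          ((EuclideanSpace.single (⟨0, hn⟩ : Fin n) t : EuclideanSpace ℝ (Fin n)) :
            OnePoint (EuclideanSpace ℝ (Fin n)))) '' Set.Ici s ∪ {∞})ᶜ)
      ((fun t : ℝ =>
          ((EuclideanSpace.single (⟨0, hn⟩ : Fin n) t : EuclideanSpace ℝ (Fin n)) :
            OnePoint (EuclideanSpace ℝ (Fin n)))) '' Set.Icc (-1) 0)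
      = Real.log (1 + 1 / s) := by
  set i : Fin n := ⟨0, hn⟩
  change deltaDiam (axisRay i s)ᶜ (realAxis i '' Icc (-1) 0) = log (1 + 1 / s)
  have hfrontier := frontier_compl (axisRay i s)
  refine deltaDiam_eq_log (fun x hx y hy a ha b hb => ?_)
    (mem_image_of_mem _ ⟨by norm_num, le_rfl⟩) (mem_image_of_mem _ ⟨le_rfl, by norm_num⟩)
    (hfrontier ▸ realAxis_mem_frontier_axisRay i s) (hfrontier ▸ infty_mem_frontier_axisRay i s)
    (show qCross (realAxis i s) (realAxis i 0) ∞ (realAxis i (-1)) = 1 / s by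
      simp only [realAxis, qCross_coe_infty, dist_single]
      norm_num [abs_of_pos hs])
  obtain ⟨ξ, hξ, rfl⟩ := hx
  obtain ⟨η, hη, rfl⟩ := hy
  have hsub := hfrontier ▸ (isClosed_axisRay i s).frontier_subset
  exact qCross_le_of_mem_axisRay hs (hsub ha) (hsub hb) hξ hη
end
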